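/- arXiv:math/0101143 — 6 statements merged into one kernel-verified Lean document; each statement's English description precedes it below -/
import Mathlib

section
/- Let V be a finite-dimensional ℂ-vector space with filtrations W and F of Hodge–Tate type. Then the linear map ⊕_k (F^k ∩ W_{2k}) → V induced by the inclusion maps F^k ∩ W_{2k} ⊆ V is a ℂ-linear isomorphism; equivalently, V is the internal direct sum of the subspaces F^k ∩ W_{2k}, k ∈ ℤ (only finitely many of which are nonzero). -/
/-!
Upward induction along the weight filtration, starting where `W` vanishes, shows two things.
Purity of type `(k, k)` (`F^{k+1} ∩ W_{2k} ⊆ W_{2k-2}`) pushes `F^k ∩ W_{2j}` down to zero for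
`j < k`; this makes the pieces `F^k ∩ W_{2k}` independent, since by the modular law the other
pieces land in `W_{2k-2} + F^{k+1}`. The splitting `W_{2k} = (F^k ∩ W_{2k}) + W_{2k-2}` shows that
every `W_{2k}`, hence `V`, is spanned by the pieces.
-/

/-- A pair of filtrations `(W, F)` on a complex vector space `V` is of Hodge–Tate type:
`W` is an increasing (weight) filtration, exhaustive and separated, `F` a decreasing (Hodge)
filtration, the odd weight-graded pieces vanish, and the weight-`2k` graded piece is pure of
Hodge type `(k, k)`. -/
structure IsHodgeTate {V : Type*} [AddCommGroup V] [Module ℂ V]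
    (W : ℤ → Submodule ℂ V) (F : ℤ → Submodule ℂ V) : Prop where
  mono : Monotone W
  anti : Antitone F
  bot : ∃ N : ℤ, ∀ n ≤ N, W n = ⊥
  top : ∃ N : ℤ, ∀ n, N ≤ n → W n = ⊤
  odd : ∀ k : ℤ, W (2 * k + 1) = W (2 * k)
  pure_surj : ∀ k : ℤ, (F k ⊓ W (2 * k)) ⊔ W (2 * k - 2) = W (2 * k)
  pure_inj : ∀ k : ℤ, F (k + 1) ⊓ W (2 * k) ≤ W (2 * k - 2)

open Filter

theorem Int.forall_of_eventually_atBot_of_succ {P : ℤ → Prop} (hbot : ∀ᶠ n in atBot, P n)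
    (hsucc : ∀ n, P n → P (n + 1)) (n : ℤ) : P n := by
  obtain ⟨N, hN⟩ := eventually_atBot.mp hbot
  rcases le_total n N with hn | hn
  · exact hN n hn
  · induction n, hn using Int.leInduction with
    | base => exact hN N le_rfl
    | succ m _ hm => exact hsucc m hm

namespace IsHodgeTate

variable {V : Type*} [AddCommGroup V] [Module ℂ V] {W F : ℤ → Submodule ℂ V}

theorem eventually_weight_eq_bot (h : IsHodgeTate W F) : ∀ᶠ k in atBot, W (2 * k) = ⊥ := by
  obtain ⟨N, hN⟩ := h.bot
  filter_upwards [eventually_le_atBot (min N 0)] with k hk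
  exact hN _ (by omega)

theorem inf_weight_eq_bot (h : IsHodgeTate W F) {j k : ℤ} (hjk : j < k) :
    F k ⊓ W (2 * j) = ⊥ := by
  refine Int.forall_of_eventually_atBot_of_succ (P := fun j => ∀ k, j < k → F k ⊓ W (2 * j) = ⊥)
    ?_ ?_ j k hjk
  · filter_upwards [h.eventually_weight_eq_bot] with j hj k _
    rw [hj, inf_bot_eq]
  · intro j ih k hjk
    have hpure : F (j + 1 + 1) ⊓ W (2 * (j + 1)) ≤ W (2 * j) := by
      simpa only [mul_add, mul_one, add_sub_cancel_right] using h.pure_inj (j + 1)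
    rw [eq_bot_iff, ← ih k (by omega)]
    exact le_inf inf_le_left
      (hpure.trans' (inf_le_inf_right _ (h.anti (by omega : j + 1 + 1 ≤ k))))

theorem weight_inf_sup_le (h : IsHodgeTate W F) (k : ℤ) :
    W (2 * k) ⊓ (W (2 * k - 2) ⊔ F (k + 1)) ≤ W (2 * k - 2) := by
  rw [sup_comm, ← inf_sup_assoc_of_le _ (h.mono (by omega : 2 * k - 2 ≤ 2 * k)), inf_comm]
  exact sup_le (h.pure_inj k) le_rfl

theorem iSup_ne_le (h : IsHodgeTate W F) (k : ℤ) :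
    ⨆ (j) (_ : j ≠ k), F j ⊓ W (2 * j) ≤ W (2 * k - 2) ⊔ F (k + 1) := by
  refine iSup₂_le fun j hj => ?_
  rcases hj.lt_or_gt with hlt | hgt
  · exact le_sup_of_le_left (inf_le_of_right_le (h.mono (by omega)))
  · exact le_sup_of_le_right (inf_le_of_left_le (h.anti (by omega)))

theorem iSupIndep (h : IsHodgeTate W F) : iSupIndep fun k => F k ⊓ W (2 * k) := by
  intro k
  refine Disjoint.mono_right (h.iSup_ne_le k) (disjoint_iff_inf_le.mpr ?_)
  calc F k ⊓ W (2 * k) ⊓ (W (2 * k - 2) ⊔ F (k + 1))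
      ≤ F k ⊓ W (2 * (k - 1)) := by
        rw [inf_assoc, mul_sub_one]
        exact inf_le_inf_left _ (h.weight_inf_sup_le k)
    _ = ⊥ := h.inf_weight_eq_bot (sub_one_lt k)

theorem weight_le_iSup (h : IsHodgeTate W F) (n : ℤ) :
    W (2 * n) ≤ ⨆ k, F k ⊓ W (2 * k) := by
  refine Int.forall_of_eventually_atBot_of_succ (P := fun n => W (2 * n) ≤ ⨆ k, F k ⊓ W (2 * k))
    ?_ ?_ n
  · filter_upwards [h.eventually_weight_eq_bot] with n hn
    exact hn ▸ bot_le
  · intro n ih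
    rw [← h.pure_surj (n + 1)]
    refine sup_le (le_iSup (fun k => F k ⊓ W (2 * k)) (n + 1)) ?_
    simpa only [mul_add, mul_one, add_sub_cancel_right] using ih

theorem iSup_eq_top (h : IsHodgeTate W F) : ⨆ k, F k ⊓ W (2 * k) = ⊤ := by
  obtain ⟨N, hN⟩ := h.top
  rw [eq_top_iff, ← hN (2 * max N 0) (by omega)]
  exact h.weight_le_iSup _

end IsHodgeTate

theorem stmt_2_general {V : Type*} [AddCommGroup V] [Module ℂ V]
    (W F : ℤ → Submodule ℂ V) (h : IsHodgeTate W F) :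
    DirectSum.IsInternal (fun k : ℤ => F k ⊓ W (2 * k)) :=
  (DirectSum.isInternal_submodule_iff_iSupIndep_and_iSup_eq_top _).mpr
    ⟨h.iSupIndep, h.iSup_eq_top⟩

/-- `V` is the internal direct sum of the subspaces `F^k ∩ W_{2k}`, `k ∈ ℤ`: the map
`⊕_k (F^k ∩ W_{2k}) → V` induced by the inclusions is a `ℂ`-linear isomorphism. -/
theorem stmt_2 {V : Type*} [AddCommGroup V] [Module ℂ V] [FiniteDimensional ℂ V]
    (W F : ℤ → Submodule ℂ V) (h : IsHodgeTate W F) :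
    DirectSum.IsInternal (fun k : ℤ => F k ⊓ W (2 * k)) :=
  stmt_2_general W F h
end

section
/- Let H ⊂ ℂ be a lattice. For every z ∈ ℂ∖H the family (1/(z−λ) + 1/λ + z/λ²)_{λ ∈ H∖{0}} defining ζ_H(z) is summable, the function ζ_H is complex differentiable at every point of ℂ∖H, and ζ_H′(z) = −℘_H(z) for all z ∈ ℂ∖H. -/
set_option maxHeartbeats 1000000

open Metric Set Complex


/-- A lattice in `ℂ`: the set of `ℤ`-linear combinations of two `ℝ`-linearly independent
complex numbers. -/
def IsLattice (H : Set ℂ) : Prop :=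
  ∃ ω₁ ω₂ : ℂ, LinearIndependent ℝ ![ω₁, ω₂] ∧
    H = {z : ℂ | ∃ m n : ℤ, z = m * ω₁ + n * ω₂}

lemma zero_mem_lattice {H : Set ℂ} (hH : IsLattice H) : (0 : ℂ) ∈ H := by
  obtain ⟨w1, w2, li, rfl⟩ := hH
  exact ⟨0, 0, by simp⟩

lemma norm_int_pi_cast (v : Fin 2 → ℤ) : ‖(fun i => (v i : ℝ))‖ = ‖v‖ := by
  simp only [Pi.norm_def]
  congr 1

lemma lattice_summable_aux (b : Module.Basis (Fin 2) ℝ ℂ) (H : Set ℂ)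
    (hset : H = {z : ℂ | ∃ m n : ℤ, z = m * b 0 + n * b 1}) :
    Summable (fun l : ↥(H \ {0}) => (‖(l : ℂ)‖ ^ 3)⁻¹) := by
  obtain ⟨E, hE⟩ : ∃ E : (Fin 2 → ℝ) ≃L[ℝ] ℂ, ∀ x, E x = b.equivFun.symm x :=
    ⟨b.equivFun.symm.toContinuousLinearEquiv,
      fun x => congrFun (b.equivFun.symm.coe_toContinuousLinearEquiv') x⟩
  set f : (Fin 2 → ℤ) → ℂ := fun v => (v 0 : ℂ) * b 0 + (v 1 : ℂ) * b 1 with hf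
  have hEf : ∀ v : Fin 2 → ℤ, E (fun i => (v i : ℝ)) = f v := by
    intro v
    rw [hE, Module.Basis.equivFun_symm_apply, Fin.sum_univ_two]
    simp [Complex.real_smul, hf]
  set M : ℝ := ‖(E.symm : ℂ →L[ℝ] (Fin 2 → ℝ))‖ + 1 with hM
  have hM0 : 0 < M := by positivity
  have hlow : ∀ v : Fin 2 → ℤ, ‖v‖ ≤ M * ‖f v‖ := by
    intro v
    calc ‖v‖ = ‖(fun i => (v i : ℝ))‖ := (norm_int_pi_cast v).symm
    _ = ‖E.symm (f v)‖ := by rw [← hEf v, ContinuousLinearEquiv.symm_apply_apply]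
    _ ≤ ‖(E.symm : ℂ →L[ℝ] (Fin 2 → ℝ))‖ * ‖f v‖ := by
        have := (E.symm : ℂ →L[ℝ] (Fin 2 → ℝ)).le_opNorm (f v)
        simpa using this
    _ ≤ M * ‖f v‖ := by
        have := norm_nonneg (f v)
        nlinarith [norm_nonneg ((E.symm : ℂ →L[ℝ] (Fin 2 → ℝ)))]
  have hfinj : Function.Injective f := by
    intro v w hvw
    have : E (fun i => (v i : ℝ)) = E (fun i => (w i : ℝ)) := by rw [hEf, hEf, hvw]
    have h2 := E.injective this
    funext i
    exact_mod_cast congrFun h2 i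
  have hmem : ∀ v : Fin 2 → ℤ, f v ∈ H := by
    intro v; rw [hset]; exact ⟨v 0, v 1, rfl⟩
  have hsurj : ∀ x ∈ H, ∃ v : Fin 2 → ℤ, f v = x := by
    intro x hx; rw [hset] at hx; obtain ⟨m, n, rfl⟩ := hx
    exact ⟨![m, n], by simp [hf]⟩
  have hf0 : f 0 = 0 := by simp [hf]
  let ε : {v : Fin 2 → ℤ // v ≠ 0} → ↥(H \ {0}) := fun v =>
    ⟨f v.1, hmem v.1, by
      simp only [Set.mem_singleton_iff]
      intro h
      exact v.2 (hfinj (h.trans hf0.symm))⟩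
  have hbij : Function.Bijective ε := by
    constructor
    · intro v w hvw
      exact Subtype.ext (hfinj (congrArg Subtype.val hvw))
    · rintro ⟨x, hxH, hx0⟩
      obtain ⟨v, rfl⟩ := hsurj x hxH
      refine ⟨⟨v, ?_⟩, rfl⟩
      intro h
      exact hx0 (by rw [h, hf0]; rfl)
  rw [← (Equiv.ofBijective ε hbij).summable_iff]
  have base : Summable fun v : {v : Fin 2 → ℤ // v ≠ 0} => M ^ 3 * (‖v.1‖ ^ 3)⁻¹ := by
    have h3 : Summable fun v : Fin 2 → ℤ => ‖v‖ ^ (-(3:ℝ)) :=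
      EisensteinSeries.summable_one_div_norm_rpow (by norm_num)
    have := (h3.subtype {v : Fin 2 → ℤ | v ≠ 0}).mul_left (M ^ 3)
    refine this.congr fun v => ?_
    simp only [Function.comp_apply]
    congr 1
    rw [Real.rpow_neg (norm_nonneg _), ← Real.rpow_natCast ‖v.1‖ 3]
    norm_num
  refine base.of_nonneg_of_le (fun v => by
    show (0:ℝ) ≤ (‖(ε v : ℂ)‖ ^ 3)⁻¹
    positivity) fun v => ?_
  have hfv0 : (0:ℝ) < ‖f v.1‖ := by
    rw [norm_pos_iff]
    intro h
    exact v.2 (hfinj (h.trans hf0.symm))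
  show ((‖(ε v : ℂ)‖) ^ 3)⁻¹ ≤ M ^ 3 * (‖v.1‖ ^ 3)⁻¹
  have hεv : ((ε v : ℂ)) = f v.1 := rfl
  have hv0 : (0:ℝ) < ‖v.1‖ := norm_pos_iff.mpr v.2
  rw [hεv, ← div_eq_mul_inv, le_div_iff₀ (by positivity), inv_mul_eq_div,
    div_le_iff₀ (by positivity)]
  calc ‖v.1‖ ^ 3 ≤ (M * ‖f v.1‖) ^ 3 := pow_le_pow_left₀ (norm_nonneg _) (hlow v.1) 3
  _ = M ^ 3 * ‖f v.1‖ ^ 3 := by ring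

lemma lattice_summable {H : Set ℂ} (hH : IsLattice H) :
    Summable (fun l : ↥(H \ {0}) => (‖(l : ℂ)‖ ^ 3)⁻¹) := by
  obtain ⟨w1, w2, li, hset⟩ := hH
  have hcard : Fintype.card (Fin 2) = Module.finrank ℝ ℂ := by
    simp [Complex.finrank_real_complex]
  have hb : ⇑(basisOfLinearIndependentOfCardEqFinrank li hcard) = ![w1, w2] :=
    coe_basisOfLinearIndependentOfCardEqFinrank li hcard
  refine lattice_summable_aux (basisOfLinearIndependentOfCardEqFinrank li hcard) H ?_
  rw [hb, hset]
  simp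

/-- The Weierstrass zeta function of a lattice `H`. -/
noncomputable def wzeta (H : Set ℂ) (z : ℂ) : ℂ :=
  z⁻¹ + ∑' l : ↥(H \ {0}), ((z - (l : ℂ))⁻¹ + ((l : ℂ))⁻¹ + z / (l : ℂ) ^ 2)

/-- The Weierstrass `℘`-function of a lattice `H`. -/
noncomputable def wp (H : Set ℂ) (z : ℂ) : ℂ :=
  ((z : ℂ) ^ 2)⁻¹ + ∑' l : ↥(H \ {0}), (((z - (l : ℂ)) ^ 2)⁻¹ - (((l : ℂ)) ^ 2)⁻¹)


lemma lattice_finite {H : Set ℂ}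
    (hsum : Summable (fun l : ↥(H \ {0}) => (‖(l : ℂ)‖ ^ 3)⁻¹)) (R : ℝ) :
    {l : ↥(H \ {0}) | ‖(l : ℂ)‖ ≤ R}.Finite := by
  have h := hsum.tendsto_cofinite_zero
  have hε : (0:ℝ) < ((max R 1) ^ 3)⁻¹ := by
    have : (0:ℝ) < max R 1 := lt_of_lt_of_le one_pos (le_max_right _ _)
    positivity
  have hev : ∀ᶠ l : ↥(H \ {0}) in Filter.cofinite, (‖(l : ℂ)‖ ^ 3)⁻¹ < ((max R 1) ^ 3)⁻¹ :=
    h.eventually (gt_mem_nhds hε)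
  rw [Filter.eventually_cofinite] at hev
  refine hev.subset fun l hl => ?_
  simp only [Set.mem_setOf_eq, not_lt] at hl ⊢
  have hl0 : (l : ℂ) ≠ 0 := by
    have := l.2.2
    simpa using this
  have hn : (0:ℝ) < ‖(l : ℂ)‖ := norm_pos_iff.mpr hl0
  refine le_of_not_gt fun hcon => ?_
  have h1 : ‖(l : ℂ)‖ ^ 3 ≤ (max R 1) ^ 3 := by
    have : ‖(l : ℂ)‖ ≤ max R 1 := le_trans hl (le_max_left _ _)
    gcongr
  have := inv_anti₀ (by positivity) h1
  linarith [not_lt.mp (not_lt.mpr this)]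

lemma lattice_nbhd {H : Set ℂ} (h0 : (0:ℂ) ∈ H)
    (hsum : Summable (fun l : ↥(H \ {0}) => (‖(l : ℂ)‖ ^ 3)⁻¹))
    {z : ℂ} (hz : z ∉ H) : ∃ r : ℝ, 0 < r ∧ closedBall z r ∩ H = ∅ := by
  set S : Set ℂ := {x | x ∈ H ∧ ‖x‖ ≤ ‖z‖ + 1} with hS
  have hSfin : S.Finite := by
    have hfin := lattice_finite hsum (‖z‖ + 1)
    refine ((hfin.image (fun l : ↥(H \ {0}) => (l : ℂ))).insert 0).subset ?_
    rintro x ⟨hxH, hxn⟩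
    rcases eq_or_ne x 0 with rfl | hx0
    · exact Set.mem_insert _ _
    · exact Set.mem_insert_of_mem _ ⟨⟨x, ⟨hxH, hx0⟩⟩, hxn, rfl⟩
  have hzS : z ∉ S := fun h => hz h.1
  have hSne : S.Nonempty := ⟨0, h0, by simp; positivity⟩
  have hd : 0 < Metric.infDist z S :=
    ((hSfin.isClosed).notMem_iff_infDist_pos hSne).1 hzS
  refine ⟨min 1 (Metric.infDist z S / 2), by positivity, ?_⟩
  rw [Set.eq_empty_iff_forall_notMem]
  rintro x ⟨hxB, hxH⟩
  rw [mem_closedBall] at hxB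
  have hd1 : dist x z ≤ 1 := hxB.trans (min_le_left _ _)
  have hxS : x ∈ S := by
    refine ⟨hxH, ?_⟩
    calc ‖x‖ = ‖z + (x - z)‖ := by ring_nf
    _ ≤ ‖z‖ + ‖x - z‖ := norm_add_le _ _
    _ ≤ ‖z‖ + 1 := by
        have : ‖x - z‖ = dist x z := (dist_eq_norm _ _).symm
        linarith
  have h1 : Metric.infDist z S ≤ dist z x := Metric.infDist_le_dist_of_mem hxS
  have h2 : dist x z ≤ Metric.infDist z S / 2 := hxB.trans (min_le_right _ _)
  rw [dist_comm] at h1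
  linarith

lemma wzeta_main {H : Set ℂ} (h0 : (0:ℂ) ∈ H)
    (hsum : Summable (fun l : ↥(H \ {0}) => (‖(l : ℂ)‖ ^ 3)⁻¹))
    {z₀ : ℂ} (hz : z₀ ∉ H) :
    Summable (fun l : ↥(H \ {0}) => (z₀ - (l : ℂ))⁻¹ + ((l : ℂ))⁻¹ + z₀ / (l : ℂ) ^ 2) ∧
      DifferentiableAt ℂ (wzeta H) z₀ ∧ deriv (wzeta H) z₀ = -wp H z₀ := by
  obtain ⟨r, hr, hball⟩ := lattice_nbhd h0 hsum hz
  set K : Set ℂ := closedBall z₀ r with hK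
  set U : Set ℂ := ball z₀ r with hUdef
  have hUK : U ⊆ K := ball_subset_closedBall
  have hKH : ∀ x ∈ K, x ∉ H := by
    intro x hx hxH
    exact Set.eq_empty_iff_forall_notMem.1 hball x ⟨hx, hxH⟩
  set F : ↥(H \ {0}) → ℂ → ℂ :=
    fun l z => (z - (l : ℂ))⁻¹ + ((l : ℂ))⁻¹ + z / (l : ℂ) ^ 2 with hF
  have hlne : ∀ l : ↥(H \ {0}), (l : ℂ) ≠ 0 := fun l => by
    have := l.2.2; simpa using this
  have hxl : ∀ (l : ↥(H \ {0})) (x : ℂ), x ∈ K → x - (l : ℂ) ≠ 0 := by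
    intro l x hx h
    exact hKH x hx (by rw [sub_eq_zero] at h; rw [h]; exact l.2.1)
  have hcont : ∀ l : ↥(H \ {0}), ContinuousOn (F l) K := by
    intro l
    refine ContinuousOn.add (ContinuousOn.add ?_ continuousOn_const) ?_
    · exact (continuousOn_id.sub continuousOn_const).inv₀ (hxl l)
    · exact continuousOn_id.div_const _
  have hdiffK : ∀ l : ↥(H \ {0}), ∀ x ∈ K,
      HasDerivAt (F l) (-(((x - (l : ℂ)) ^ 2)⁻¹ - ((l : ℂ) ^ 2)⁻¹)) x := by
    intro l x hx
    have h1 : HasDerivAt (fun w : ℂ => (w - (l : ℂ))⁻¹)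
        (-1 / (x - (l : ℂ)) ^ 2) x :=
      ((hasDerivAt_id x).sub_const _).inv (hxl l x hx)
    have h2 : HasDerivAt (fun w : ℂ => w / (l : ℂ) ^ 2) (1 / (l : ℂ) ^ 2) x :=
      (hasDerivAt_id x).div_const _
    have := (h1.add_const ((l : ℂ))⁻¹).add h2
    have e : -(((x - (l : ℂ)) ^ 2)⁻¹ - ((l : ℂ) ^ 2)⁻¹) =
        -1 / (x - (l : ℂ)) ^ 2 + 1 / (l : ℂ) ^ 2 := by ring
    rw [e]; exact this
  have hdiff : ∀ l : ↥(H \ {0}), DifferentiableOn ℂ (F l) U := by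
    intro l
    intro x hx
    exact (hdiffK l x (hUK hx)).differentiableAt.differentiableWithinAt
  set u : ↥(H \ {0}) → ℝ := fun l => sSup ((fun x => ‖F l x‖) '' K) with hu_def
  have hbdd : ∀ l, BddAbove ((fun x => ‖F l x‖) '' K) := fun l =>
    (isCompact_closedBall _ _).bddAbove_image (hcont l).norm
  have hFle : ∀ (l : ↥(H \ {0})) (x : ℂ), x ∈ K → ‖F l x‖ ≤ u l := fun l x hx =>
    le_csSup (hbdd l) ⟨x, hx, rfl⟩
  have hu0 : ∀ l, 0 ≤ u l := fun l =>
    Real.sSup_nonneg (by rintro y ⟨x, hx, rfl⟩; positivity)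
  set A : ℝ := ‖z₀‖ + r with hA_def
  have hA : 0 < A := by positivity
  have hxA : ∀ x ∈ K, ‖x‖ ≤ A := by
    intro x hx
    rw [hK, mem_closedBall, dist_eq_norm] at hx
    calc ‖x‖ = ‖z₀ + (x - z₀)‖ := by ring_nf
    _ ≤ ‖z₀‖ + ‖x - z₀‖ := norm_add_le _ _
    _ ≤ ‖z₀‖ + r := by linarith
  have hkey : ∀ l : ↥(H \ {0}), 2 * A + 1 ≤ ‖(l : ℂ)‖ →
      u l ≤ (2 * A ^ 2) * (‖(l : ℂ)‖ ^ 3)⁻¹ := by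
    intro l hl
    have hc0 : (0:ℝ) < ‖(l : ℂ)‖ := norm_pos_iff.mpr (hlne l)
    refine Real.sSup_le ?_ (by positivity)
    rintro y ⟨x, hxK, rfl⟩
    show ‖F l x‖ ≤ 2 * A ^ 2 * (‖(l : ℂ)‖ ^ 3)⁻¹
    have hxA' := hxA x hxK
    have hsub : ‖(l : ℂ)‖ / 2 ≤ ‖x - (l : ℂ)‖ := by
      have h1 : ‖(l : ℂ)‖ - ‖x‖ ≤ ‖(l : ℂ) - x‖ := norm_sub_norm_le _ _
      rw [norm_sub_rev] at h1
      linarith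
    have hid : F l x = x ^ 2 / ((l : ℂ) ^ 2 * (x - (l : ℂ))) := by
      rw [hF]
      field_simp [hlne l, hxl l x hxK]
      ring
    rw [hid, norm_div, norm_mul, norm_pow, norm_pow]
    have hden : (0:ℝ) < ‖(l : ℂ)‖ ^ 2 * (‖(l : ℂ)‖ / 2) := by positivity
    calc ‖x‖ ^ 2 / (‖(l : ℂ)‖ ^ 2 * ‖x - (l : ℂ)‖)
        ≤ A ^ 2 / (‖(l : ℂ)‖ ^ 2 * (‖(l : ℂ)‖ / 2)) := by
          apply div_le_div₀ (by positivity) (by gcongr) hden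
          gcongr
    _ = (2 * A ^ 2) * (‖(l : ℂ)‖ ^ 3)⁻¹ := by
          field_simp
  have hcofin : ∀ᶠ l : ↥(H \ {0}) in Filter.cofinite,
      u l ≤ (2 * A ^ 2) * (‖(l : ℂ)‖ ^ 3)⁻¹ := by
    rw [Filter.eventually_cofinite]
    refine (lattice_finite hsum (2 * A + 1)).subset ?_
    intro l hl
    simp only [Set.mem_setOf_eq] at hl ⊢
    by_contra hcon
    exact hl (hkey l (not_le.mp hcon).le)
  have husum : Summable u := by
    refine Summable.of_norm_bounded_eventually
      (hsum.mul_left (2 * A ^ 2)) ?_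
    filter_upwards [hcofin] with l hl
    rwa [Real.norm_eq_abs, _root_.abs_of_nonneg (hu0 l)]
  have hz₀K : z₀ ∈ K := mem_closedBall_self hr.le
  have hz₀U : z₀ ∈ U := mem_ball_self hr
  have hSum0 : Summable fun l => F l z₀ :=
    Summable.of_norm_bounded husum (fun l => hFle l z₀ hz₀K)
  set S : ℂ → ℂ := fun w => ∑' l : ↥(H \ {0}), F l w with hS
  have hSdiff : DifferentiableOn ℂ S U :=
    differentiableOn_tsum_of_summable_norm husum hdiff isOpen_ball
      (fun l w hw => hFle l w (hUK hw))
  have hSat : DifferentiableAt ℂ S z₀ :=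
    (hSdiff z₀ hz₀U).differentiableAt (isOpen_ball.mem_nhds hz₀U)
  have hz₀0 : z₀ ≠ 0 := fun h => hz (h ▸ h0)
  have hinv : HasDerivAt (fun w : ℂ => w⁻¹) (-(z₀ ^ 2)⁻¹) z₀ := by
    simpa using hasDerivAt_inv hz₀0
  have hwz : wzeta H = fun w => w⁻¹ + S w := rfl
  have hder : HasDerivAt (wzeta H) (-(z₀ ^ 2)⁻¹ + deriv S z₀) z₀ := by
    rw [hwz]; exact hinv.add hSat.hasDerivAt
  have hs : HasSum (fun l => deriv (F l) z₀) (deriv S z₀) :=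
    hasSum_deriv_of_summable_norm husum hdiff isOpen_ball
      (fun l w hw => hFle l w (hUK hw)) hz₀U
  have hderF : ∀ l, deriv (F l) z₀ = -(((z₀ - (l : ℂ)) ^ 2)⁻¹ - ((l : ℂ) ^ 2)⁻¹) :=
    fun l => (hdiffK l z₀ hz₀K).deriv
  have hs2 : HasSum (fun l : ↥(H \ {0}) => ((z₀ - (l : ℂ)) ^ 2)⁻¹ - ((l : ℂ) ^ 2)⁻¹)
      (-(deriv S z₀)) := by
    have := hs.neg
    simp only [hderF, neg_neg] at this
    exact this
  refine ⟨hSum0, hder.differentiableAt, ?_⟩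
  rw [hder.deriv]
  have hwp : wp H z₀ = (z₀ ^ 2)⁻¹ +
      ∑' l : ↥(H \ {0}), (((z₀ - (l : ℂ)) ^ 2)⁻¹ - ((l : ℂ) ^ 2)⁻¹) := rfl
  rw [hwp, hs2.tsum_eq]
  ring

/-- For every `z ∈ ℂ∖H` the family defining `ζ_H(z)` is summable, `ζ_H` is complex
differentiable at every point of `ℂ∖H`, and `ζ_H′ = −℘_H` on `ℂ∖H`. -/
theorem stmt_4 (H : Set ℂ) (hH : IsLattice H) :
    (∀ z : ℂ, z ∉ H →
      Summable fun l : ↥(H \ {0}) => (z - (l : ℂ))⁻¹ + ((l : ℂ))⁻¹ + z / (l : ℂ) ^ 2) ∧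
    (∀ z : ℂ, z ∉ H → DifferentiableAt ℂ (wzeta H) z) ∧
    (∀ z : ℂ, z ∉ H → deriv (wzeta H) z = -wp H z) := by
  have h0 := zero_mem_lattice hH
  have hsum := lattice_summable hH
  exact ⟨fun z hz => (wzeta_main h0 hsum hz).1,
    fun z hz => (wzeta_main h0 hsum hz).2.1,
    fun z hz => (wzeta_main h0 hsum hz).2.2⟩
end

section
/- Let H ⊂ ℂ be a lattice, and set A = −15 ∑_{λ ∈ H∖{0}} λ^{−4} and B = −35 ∑_{λ ∈ H∖{0}} λ^{−6}. Then as z → 0 (through z with z ∉ H, z ≠ 0) one has: (i) (℘_H(z) − z^{−2} + (A/5)z² + (B/7)z⁴)/z⁵ → 0, i.e. ℘_H(z) = z^{−2} − (A/5)z² − (B/7)z⁴ + O(z⁶); and (ii) (−(1/2)℘_H′(z) − z^{−3} − (A/5)z − (2B/7)z³)/z⁴ → 0, i.e. −(1/2)℘_H′(z) = z^{−3} + (A/5)z + (2B/7)z³ + O(z⁵). -/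
open Filter Topology

lemma lattice_facts {H : Set ℂ} (hH : IsLattice H) :
    ∃ r : ℝ, 0 < r ∧ r ≤ 1 ∧ (∀ l : ↥(H \ {0}), r ≤ ‖(l : ℂ)‖) ∧
      Summable fun l : ↥(H \ {0}) => (‖(l : ℂ)‖ ^ 3)⁻¹ := by
  obtain ⟨ω₁, ω₂, hli, hEq⟩ := hH
  have hcard : Fintype.card (Fin 2) = Module.finrank ℝ ℂ := by
    simp [Complex.finrank_real_complex]
  let b := basisOfLinearIndependentOfCardEqFinrank hli hcard
  have hb : ⇑b = ![ω₁, ω₂] := coe_basisOfLinearIndependentOfCardEqFinrank hli hcard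
  let T : ℂ →L[ℝ] (Fin 2 → ℝ) := LinearMap.toContinuousLinearMap (b.equivFun.toLinearMap)
  set φ : (Fin 2 → ℤ) → ℂ := fun x => (x 0 : ℂ) * ω₁ + (x 1 : ℂ) * ω₂ with hφ
  have key : ∀ x : Fin 2 → ℤ, T (φ x) = fun i => ((x i : ℤ) : ℝ) := by
    intro x
    have h1 : b.equivFun.symm (fun i => ((x i : ℤ) : ℝ)) = φ x := by
      rw [Module.Basis.equivFun_symm_apply, Fin.sum_univ_two, hb]
      simp [Complex.real_smul]
      rfl
    have h2 : T (φ x) = b.equivFun (φ x) := rfl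
    rw [h2, ← h1, LinearEquiv.apply_symm_apply]
  have hTnorm : ∀ x : Fin 2 → ℤ, ‖T (φ x)‖ = ‖x‖ := by
    intro x
    rw [key x]
    apply le_antisymm
    · apply (pi_norm_le_iff_of_nonneg (norm_nonneg x)).2
      intro i
      rw [Int.norm_cast_real]
      exact norm_le_pi_norm x i
    · apply (pi_norm_le_iff_of_nonneg (norm_nonneg _)).2
      intro i
      rw [← Int.norm_cast_real]
      exact norm_le_pi_norm (fun i => ((x i : ℤ) : ℝ)) i
  set C : ℝ := max ‖T‖ 1 with hCdef
  have hC1 : (1:ℝ) ≤ C := le_max_right _ _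
  have hC : (0:ℝ) < C := lt_of_lt_of_le one_pos hC1
  have hTle : ∀ z : ℂ, ‖T z‖ ≤ C * ‖z‖ := fun z =>
    (T.le_opNorm z).trans (by gcongr; exact le_max_left _ _)
  have mem : ∀ l : ↥(H \ {0}), ∃ x : Fin 2 → ℤ, φ x = (l : ℂ) ∧ x ≠ 0 := by
    rintro ⟨l, hl, hl0⟩
    rw [hEq] at hl
    obtain ⟨m, n, rfl⟩ := hl
    refine ⟨![m, n], by simp [hφ], ?_⟩
    intro h
    apply hl0
    have hm : m = 0 := by simpa using congrFun h 0
    have hn : n = 0 := by simpa using congrFun h 1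
    simp [hm, hn]
  have hx1 : ∀ x : Fin 2 → ℤ, x ≠ 0 → (1:ℝ) ≤ ‖x‖ := by
    intro x hx
    obtain ⟨i, hi⟩ := Function.ne_iff.1 hx
    refine le_trans ?_ (norm_le_pi_norm x i)
    rw [Int.norm_eq_abs]
    exact_mod_cast Int.one_le_abs hi
  have hlow : ∀ l : ↥(H \ {0}), C⁻¹ ≤ ‖(l : ℂ)‖ := by
    intro l
    obtain ⟨x, hx, hx0⟩ := mem l
    have h1 : (1:ℝ) ≤ C * ‖(l : ℂ)‖ := by
      calc (1:ℝ) ≤ ‖x‖ := hx1 x hx0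
        _ = ‖T (φ x)‖ := (hTnorm x).symm
        _ = ‖T (l : ℂ)‖ := by rw [hx]
        _ ≤ C * ‖(l : ℂ)‖ := hTle _
    rw [inv_eq_one_div, div_le_iff₀ hC, mul_comm]
    exact h1
  -- summability
  set ψ : ↥(H \ {0}) → (Fin 2 → ℤ) := fun l => (mem l).choose with hψdef
  have hψ : ∀ l, φ (ψ l) = (l : ℂ) := fun l => (mem l).choose_spec.1
  have hψinj : Function.Injective ψ := by
    intro a b hab
    apply Subtype.ext
    rw [← hψ a, ← hψ b, hab]
  have hg : Summable fun x : Fin 2 → ℤ => C ^ 3 * ‖x‖ ^ (-(3:ℝ)) :=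
    (EisensteinSeries.summable_one_div_norm_rpow (by norm_num)).mul_left _
  refine ⟨C⁻¹, by positivity, by rw [inv_eq_one_div, div_le_one hC]; exact hC1, hlow, ?_⟩
  apply Summable.of_nonneg_of_le (fun l => by positivity) _ (hg.comp_injective hψinj)
  intro l
  have hl0 : (l : ℂ) ≠ 0 := l.2.2
  have hlpos : (0:ℝ) < ‖(l : ℂ)‖ := norm_pos_iff.2 hl0
  have h1 : ‖ψ l‖ ≤ C * ‖(l : ℂ)‖ := by
    calc ‖ψ l‖ = ‖T (φ (ψ l))‖ := (hTnorm _).symm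
      _ = ‖T (l : ℂ)‖ := by rw [hψ l]
      _ ≤ C * ‖(l : ℂ)‖ := hTle _
  have h2 : (0:ℝ) < ‖ψ l‖ := lt_of_lt_of_le one_pos (hx1 _ (mem l).choose_spec.2)
  have hkey : ‖ψ l‖ ^ (3:ℕ) ≤ C ^ 3 * ‖(l : ℂ)‖ ^ 3 := by
    calc ‖ψ l‖ ^ (3:ℕ) ≤ (C * ‖(l : ℂ)‖) ^ 3 := pow_le_pow_left₀ (norm_nonneg _) h1 3
      _ = C ^ 3 * ‖(l : ℂ)‖ ^ 3 := by ring
  have hrpow : ‖ψ l‖ ^ (-(3:ℝ)) = (‖ψ l‖ ^ (3:ℕ))⁻¹ := by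
    rw [← Real.rpow_natCast ‖ψ l‖ 3, ← Real.rpow_neg (norm_nonneg _)]
    norm_num
  show (‖(l : ℂ)‖ ^ 3)⁻¹ ≤ C ^ 3 * ‖ψ l‖ ^ (-(3:ℝ))
  rw [hrpow]
  have h3 : (C ^ 3 * ‖(l : ℂ)‖ ^ 3)⁻¹ ≤ (‖ψ l‖ ^ (3:ℕ))⁻¹ :=
    inv_anti₀ (by positivity) hkey
  calc (‖(l : ℂ)‖ ^ 3)⁻¹ = C ^ 3 * (C ^ 3 * ‖(l : ℂ)‖ ^ 3)⁻¹ := by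
        rw [mul_inv, ← mul_assoc, mul_inv_cancel₀ (by positivity : (C:ℝ) ^ 3 ≠ 0), one_mul]
    _ ≤ C ^ 3 * (‖ψ l‖ ^ (3:ℕ))⁻¹ := by gcongr

lemma hasSum_geom_sq {w : ℂ} (hw : ‖w‖ < 1) :
    HasSum (fun n : ℕ => ((n : ℂ) + 1) * w ^ n) (((1 - w) ^ 2)⁻¹) := by
  have hw1 : (1 : ℂ) - w ≠ 0 := by
    intro h
    have : w = 1 := by linear_combination -h
    simp [this] at hw
  have h1 := hasSum_coe_mul_geometric_of_norm_lt_one hw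
  have h2 := hasSum_geometric_of_norm_lt_one hw
  have h3 := h1.add h2
  have he : (fun n : ℕ => (n : ℂ) * w ^ n + w ^ n) = fun n : ℕ => ((n : ℂ) + 1) * w ^ n := by
    funext n; ring
  rw [he] at h3
  convert h3 using 1
  · rfl
  · field_simp
    ring

lemma hasSum_invsq {lam z : ℂ} (hlam : lam ≠ 0) (h : ‖z‖ < ‖lam‖) :
    HasSum (fun n : ℕ => ((n : ℂ) + 1) * z ^ n * ((lam ^ (n + 2))⁻¹))
      (((z - lam) ^ 2)⁻¹) := by
  have hw : ‖z / lam‖ < 1 := by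
    rw [norm_div, div_lt_one (norm_pos_iff.2 hlam)]
    exact h
  have h1 := (hasSum_geom_sq hw).mul_right ((lam ^ 2)⁻¹)
  have hfun : (fun n : ℕ => ((n : ℂ) + 1) * (z / lam) ^ n * (lam ^ 2)⁻¹)
      = fun n : ℕ => ((n : ℂ) + 1) * z ^ n * ((lam ^ (n + 2))⁻¹) := by
    funext n
    rw [div_pow, pow_add]
    field_simp
  have hval : ((1 - z / lam) ^ 2)⁻¹ * (lam ^ 2)⁻¹ = ((z - lam) ^ 2)⁻¹ := by
    rw [← mul_inv, ← mul_pow]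
    have h5 : (1 - z / lam) * lam = lam - z := by field_simp
    rw [h5]
    congr 1
    ring
  rw [hfun, hval] at h1
  exact h1

lemma hasSum_invsq_sub {lam z : ℂ} (hlam : lam ≠ 0) (h : ‖z‖ < ‖lam‖) :
    HasSum (fun n : ℕ => ((n : ℂ) + 2) * z ^ (n + 1) * ((lam ^ (n + 3))⁻¹))
      (((z - lam) ^ 2)⁻¹ - ((lam ^ 2)⁻¹)) := by
  set f : ℕ → ℂ := fun n => ((n : ℂ) + 1) * z ^ n * ((lam ^ (n + 2))⁻¹) with hf
  have h1 : HasSum f (((z - lam) ^ 2)⁻¹) := hasSum_invsq hlam h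
  have h2 : HasSum (fun n => f (n + 1))
      ((((z - lam) ^ 2)⁻¹ - ((lam ^ 2)⁻¹))) := by
    apply (hasSum_nat_add_iff 1).2
    have : ∑ i ∈ Finset.range 1, f i = (lam ^ 2)⁻¹ := by
      simp [hf]
    rw [this, sub_add_cancel]
    exact h1
  convert h2 using 2 with n
  simp only [hf]
  push_cast
  ring

set_option maxHeartbeats 1000000 in
/-- With `A = −15 ∑_{λ≠0} λ^{−4}` and `B = −35 ∑_{λ≠0} λ^{−6}`, as `z → 0` through
`z ∉ H`, `z ≠ 0`:
`℘_H(z) = z^{−2} − (A/5)z² − (B/7)z⁴ + O(z⁶)` and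
`−(1/2)℘_H′(z) = z^{−3} + (A/5)z + (2B/7)z³ + O(z⁵)`. -/
theorem stmt_6 (H : Set ℂ) (hH : IsLattice H)
    (A B : ℂ)
    (hA : A = -15 * ∑' l : ↥(H \ {0}), ((l : ℂ) ^ 4)⁻¹)
    (hB : B = -35 * ∑' l : ↥(H \ {0}), ((l : ℂ) ^ 6)⁻¹) :
    Tendsto (fun z : ℂ =>
        (wp H z - (z ^ 2)⁻¹ + A / 5 * z ^ 2 + B / 7 * z ^ 4) / z ^ 5)
      (𝓝[{z : ℂ | z ∉ H ∧ z ≠ 0}] 0) (𝓝 0) ∧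
    Tendsto (fun z : ℂ =>
        (-(1 / 2) * deriv (wp H) z - (z ^ 3)⁻¹ - A / 5 * z - 2 * B / 7 * z ^ 3) / z ^ 4)
      (𝓝[{z : ℂ | z ∉ H ∧ z ≠ 0}] 0) (𝓝 0) := by
  obtain ⟨r, hr0, hr1, hrle, hS3⟩ := lattice_facts hH
  have hl0 : ∀ l : ↥(H \ {0}), (l : ℂ) ≠ 0 := fun l => l.2.2
  have hlpos : ∀ l : ↥(H \ {0}), (0:ℝ) < ‖(l : ℂ)‖ := fun l => lt_of_lt_of_le hr0 (hrle l)
  set σ : ℕ → ℂ := fun k => ∑' l : ↥(H \ {0}), ((l : ℂ) ^ k)⁻¹ with hσdef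
  -- summability of the σ-series for k ≥ 3
  have hsummσ : ∀ k : ℕ, 3 ≤ k → Summable (fun l : ↥(H \ {0}) => ((l : ℂ) ^ k)⁻¹) := by
    intro k hk
    rw [← summable_norm_iff]
    apply Summable.of_nonneg_of_le (fun l => norm_nonneg _) _ (hS3.mul_left ((r ^ (k-3))⁻¹))
    intro l
    rw [norm_inv, norm_pow]
    have e1 : ‖(l:ℂ)‖ ^ k = ‖(l:ℂ)‖ ^ (k - 3) * ‖(l:ℂ)‖ ^ 3 := by
      rw [← pow_add]
      congr 1
      omega
    rw [e1, mul_inv]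
    gcongr
    exact hrle l
  -- the function λ ↦ -λ
  have hneg : ∀ z ∈ H, -z ∈ H := by
    obtain ⟨ω₁, ω₂, _, hEq⟩ := hH
    intro z hz
    rw [hEq] at hz ⊢
    obtain ⟨m, n, rfl⟩ := hz
    exact ⟨-m, -n, by push_cast; ring⟩
  have hodd : ∀ k : ℕ, Odd k → σ k = 0 := by
    intro k hk
    have hinv : Function.Involutive (fun l : ↥(H \ {0}) =>
        (⟨-(l : ℂ), hneg _ l.2.1, by simp [hl0 l]⟩ : ↥(H \ {0}))) := by
      intro l
      apply Subtype.ext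
      simp
    set e : ↥(H \ {0}) ≃ ↥(H \ {0}) := hinv.toPerm _ with hedef
    have h1 := e.tsum_eq (f := fun l : ↥(H \ {0}) => ((l : ℂ) ^ k)⁻¹)
    have h2 : ∀ l : ↥(H \ {0}), (((e l : ℂ)) ^ k)⁻¹ = -(((l : ℂ)) ^ k)⁻¹ := by
      intro l
      have : ((e l : ℂ)) = -(l : ℂ) := rfl
      rw [this, hk.neg_pow, inv_neg]
    rw [tsum_congr h2, tsum_neg] at h1
    have h3 : -σ k = σ k := h1
    linear_combination (-1/2 : ℂ) * h3
  -- coefficients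
  set cf : ℕ → ℂ := fun n => match n with
    | 0 => 0
    | Nat.succ m => ((m : ℂ) + 2) * σ (m + 3) with hcfdef
  have hcf0 : cf 0 = 0 := rfl
  have hcfS : ∀ m : ℕ, cf (m + 1) = ((m : ℂ) + 2) * σ (m + 3) := fun m => rfl
  have hcf1 : cf 1 = 0 := by
    have h := hcfS 0
    norm_num at h
    rw [h, hodd 3 (by decide), mul_zero]
  have hcf3 : cf 3 = 0 := by
    have h := hcfS 2
    norm_num at h
    rw [h, hodd 5 (by decide), mul_zero]
  have hcf5 : cf 5 = 0 := by
    have h := hcfS 4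
    norm_num at h
    rw [h, hodd 7 (by decide), mul_zero]
  have hcf2 : cf 2 = 3 * σ 4 := by
    have h := hcfS 1
    norm_num at h
    rw [h]
  have hcf4 : cf 4 = 5 * σ 6 := by
    have h := hcfS 3
    norm_num at h
    rw [h]
  -- key expansion
  have hkey : ∀ z : ℂ, ‖z‖ < r / 2 →
      HasSum (fun n : ℕ => cf n * z ^ n) (wp H z - (z ^ 2)⁻¹) := by
    intro z hz
    let F : ↥(H \ {0}) × ℕ → ℂ := fun p =>
      ((p.2 : ℂ) + 2) * z ^ (p.2 + 1) * (((p.1 : ℂ)) ^ (p.2 + 3))⁻¹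
    have hv : Summable (fun n : ℕ => ((n:ℝ) + 2) * ((r/2) * (1/2) ^ n)) := by
      have h1 : Summable (fun n : ℕ => ((n:ℝ) + 1) * (1/2 : ℝ) ^ n) := by
        have ha : Summable (fun n : ℕ => (n:ℝ) * (1/2 : ℝ) ^ n) :=
          (summable_pow_mul_geometric_of_norm_lt_one 1
            (by rw [Real.norm_eq_abs, abs_lt]; constructor <;> norm_num : ‖(1/2 : ℝ)‖ < 1)).congr
            (fun n => by rw [pow_one])
        have hb : Summable (fun n : ℕ => (1/2 : ℝ) ^ n) :=
          summable_geometric_of_lt_one (by norm_num : (0:ℝ) ≤ 1/2) (by norm_num)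
        exact (ha.add hb).congr (fun n => by ring)
      apply Summable.of_nonneg_of_le (fun n => by positivity) _ ((h1.mul_left r).mul_left 2)
      intro n
      have h2 : (0:ℝ) ≤ (1/2:ℝ) ^ n := by positivity
      have h3 : (0:ℝ) ≤ (n:ℝ) := Nat.cast_nonneg n
      nlinarith [mul_nonneg (mul_nonneg hr0.le h2) h3, mul_nonneg hr0.le h2]
    have hF : Summable F := by
      apply Summable.of_norm_bounded
        (g := fun p : ↥(H \ {0}) × ℕ => (‖(p.1 : ℂ)‖ ^ 3)⁻¹ * (((p.2:ℝ) + 2) * ((r/2) * (1/2) ^ p.2)))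
        (hS3.mul_of_nonneg hv (fun l => by positivity) (fun n => by positivity))
      rintro ⟨l, n⟩
      have hnorm : ‖F (l, n)‖ = ((n:ℝ) + 2) * (‖z‖ ^ (n+1) * (‖(l:ℂ)‖ ^ (n+3))⁻¹) := by
        show ‖((n : ℂ) + 2) * z ^ (n + 1) * (((l : ℂ)) ^ (n + 3))⁻¹‖ = _
        rw [norm_mul, norm_mul, norm_inv, norm_pow, norm_pow]
        have : ‖(n : ℂ) + 2‖ = (n:ℝ) + 2 := by
          have e : ((n:ℂ) + 2) = (((n + 2 : ℕ)) : ℂ) := by push_cast; ring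
          rw [e, Complex.norm_natCast]
          push_cast; ring
        rw [this, mul_assoc]
      rw [hnorm]
      have key : ‖z‖ ^ (n+1) * (‖(l:ℂ)‖ ^ (n+3))⁻¹ ≤ (‖(l:ℂ)‖ ^ 3)⁻¹ * ((r/2) * (1/2) ^ n) := by
        have e1 : ‖z‖ ^ (n+1) * (‖(l:ℂ)‖ ^ (n+3))⁻¹
            = (‖z‖/‖(l:ℂ)‖) ^ n * ‖z‖ * (‖(l:ℂ)‖ ^ 3)⁻¹ := by
          rw [div_pow, pow_add, pow_add, pow_one]
          field_simp
        rw [e1]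
        have hzl : ‖z‖ / ‖(l:ℂ)‖ ≤ 1/2 := by
          rw [div_le_iff₀ (hlpos l)]
          have := hrle l
          calc ‖z‖ ≤ r / 2 := hz.le
            _ ≤ 1/2 * ‖(l:ℂ)‖ := by linarith
        have b1 : (‖z‖/‖(l:ℂ)‖) ^ n ≤ (1/2 : ℝ) ^ n :=
          pow_le_pow_left₀ (by positivity) hzl n
        calc (‖z‖/‖(l:ℂ)‖) ^ n * ‖z‖ * (‖(l:ℂ)‖ ^ 3)⁻¹
            ≤ (1/2) ^ n * (r/2) * (‖(l:ℂ)‖ ^ 3)⁻¹ :=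
              mul_le_mul_of_nonneg_right
                (mul_le_mul b1 hz.le (norm_nonneg z) (by positivity)) (by positivity)
          _ = (‖(l:ℂ)‖ ^ 3)⁻¹ * ((r/2) * (1/2) ^ n) := by ring
      calc ((n:ℝ) + 2) * (‖z‖ ^ (n+1) * (‖(l:ℂ)‖ ^ (n+3))⁻¹)
          ≤ ((n:ℝ) + 2) * ((‖(l:ℂ)‖ ^ 3)⁻¹ * ((r/2) * (1/2) ^ n)) :=
            mul_le_mul_of_nonneg_left key (by positivity)
        _ = (‖(l:ℂ)‖ ^ 3)⁻¹ * (((n:ℝ) + 2) * ((r/2) * (1/2) ^ n)) := by ring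
    -- fiberwise over the lattice
    have hfib_l : ∀ l : ↥(H \ {0}), HasSum (fun n : ℕ => F (l, n))
        (((z - (l : ℂ)) ^ 2)⁻¹ - (((l : ℂ)) ^ 2)⁻¹) := by
      intro l
      have hzl : ‖z‖ < ‖(l:ℂ)‖ := lt_of_lt_of_le hz (by linarith [hrle l])
      show HasSum (fun n : ℕ => ((n : ℂ) + 2) * z ^ (n + 1) * (((l : ℂ)) ^ (n + 3))⁻¹) _
      exact hasSum_invsq_sub (hl0 l) hzl
    have h1 : HasSum (fun l : ↥(H \ {0}) => (((z - (l : ℂ)) ^ 2)⁻¹ - (((l : ℂ)) ^ 2)⁻¹))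
        (∑' p, F p) := hF.hasSum.prod_fiberwise hfib_l
    -- fiberwise over ℕ
    have hfib_n : ∀ n : ℕ, HasSum (fun l : ↥(H \ {0}) => F (l, n)) (cf (n+1) * z ^ (n+1)) := by
      intro n
      have h2 := (hsummσ (n+3) (by omega)).hasSum.mul_left (((n:ℂ) + 2) * z ^ (n+1))
      have e2 : cf (n+1) * z ^ (n+1) = ((n:ℂ) + 2) * z ^ (n+1) * σ (n+3) := by
        rw [hcfS n]; ring
      rw [e2]
      show HasSum (fun l : ↥(H \ {0}) =>
        ((n : ℂ) + 2) * z ^ (n + 1) * (((l : ℂ)) ^ (n + 3))⁻¹) _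
      exact h2.congr_fun (fun l => by ring)
    have hswap : Summable (fun q : ℕ × ↥(H \ {0}) => F q.swap) := hF.prod_symm
    have h2 : HasSum (fun n : ℕ => cf (n+1) * z ^ (n+1)) (∑' p, F p) := by
      have h3 := hswap.hasSum.prod_fiberwise (fun n => hfib_n n)
      have h4 : ∑' q : ℕ × ↥(H \ {0}), F q.swap = ∑' p, F p := by
        have := (Equiv.prodComm ℕ ↥(H \ {0})).tsum_eq (f := F)
        simpa [Equiv.prodComm] using this
      rwa [h4] at h3
    have h5 : HasSum (fun n : ℕ => cf n * z ^ n) (∑' p, F p) := by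
      have h6 := (hasSum_nat_add_iff (f := fun n : ℕ => cf n * z ^ n) 1).1 h2
      simpa [hcf0] using h6
    have hwp : wp H z - (z ^ 2)⁻¹
        = ∑' l : ↥(H \ {0}), (((z - (l : ℂ)) ^ 2)⁻¹ - (((l : ℂ)) ^ 2)⁻¹) := by
      unfold wp; ring
    rw [hwp, h1.tsum_eq]
    exact h5
  -- ## coefficient bounds
  set Sb : ℝ := ∑' l : ↥(H \ {0}), (‖(l : ℂ)‖ ^ 3)⁻¹ with hSbdef
  have hSb0 : 0 ≤ Sb := tsum_nonneg (fun l => by positivity)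
  have hcfbound : ∀ n : ℕ, ‖cf n‖ ≤ ((n:ℝ) + 1) * ((Sb * r) * (r⁻¹) ^ n) := by
    intro n
    cases n with
    | zero =>
      rw [hcf0]
      simp only [norm_zero]
      positivity
    | succ m =>
      rw [hcfS m, norm_mul]
      have h1 : ‖(m:ℂ) + 2‖ = (m:ℝ) + 2 := by
        have e : ((m:ℂ) + 2) = (((m + 2 : ℕ)) : ℂ) := by push_cast; ring
        rw [e, Complex.norm_natCast]
        push_cast; ring
      have hsm : Summable (fun l : ↥(H \ {0}) => ‖((l : ℂ) ^ (m+3))⁻¹‖) :=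
        summable_norm_iff.2 (hsummσ (m+3) (by omega))
      have hbnd : ∀ l : ↥(H \ {0}),
          ‖((l : ℂ) ^ (m+3))⁻¹‖ ≤ (r ^ m)⁻¹ * (‖(l:ℂ)‖ ^ 3)⁻¹ := by
        intro l
        rw [norm_inv, norm_pow]
        have e1 : ‖(l:ℂ)‖ ^ (m + 3) = ‖(l:ℂ)‖ ^ m * ‖(l:ℂ)‖ ^ 3 := by rw [← pow_add]
        rw [e1, mul_inv]
        gcongr
        exact hrle l
      have h2 : ‖σ (m+3)‖ ≤ (r ^ m)⁻¹ * Sb := by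
        calc ‖σ (m+3)‖ ≤ ∑' l : ↥(H \ {0}), ‖((l : ℂ) ^ (m+3))⁻¹‖ :=
              norm_tsum_le_tsum_norm hsm
          _ ≤ ∑' l : ↥(H \ {0}), (r ^ m)⁻¹ * (‖(l:ℂ)‖ ^ 3)⁻¹ :=
              Summable.tsum_le_tsum hbnd hsm (hS3.mul_left _)
          _ = (r ^ m)⁻¹ * Sb := tsum_mul_left
      calc ‖(m:ℂ) + 2‖ * ‖σ (m+3)‖ = ((m:ℝ) + 2) * ‖σ (m+3)‖ := by rw [h1]
        _ ≤ ((m:ℝ) + 2) * ((r ^ m)⁻¹ * Sb) :=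
            mul_le_mul_of_nonneg_left h2 (by positivity)
        _ = (((m+1:ℕ):ℝ) + 1) * ((Sb * r) * (r⁻¹) ^ (m+1)) := by
            rw [pow_succ, inv_pow]
            push_cast
            field_simp
            ring
  have hcfbound' : ∀ n : ℕ, ‖cf n‖ ≤ ((n:ℝ) + 1) * ((Sb * r) * (r⁻¹) ^ n) := hcfbound
  -- ## geometric summability
  have hP : ∀ (j : ℕ) (q : ℝ), 0 < q → q < 1 →
      Summable (fun n : ℕ => ((n:ℝ) + 1) ^ j * q ^ n) := by
    intro j q hq0 hq1
    have h1 : Summable (fun n : ℕ => ((n:ℝ)) ^ j * q ^ n) :=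
      summable_pow_mul_geometric_of_norm_lt_one j
        (by rw [Real.norm_eq_abs, abs_lt]; constructor <;> nlinarith)
    have h2 := (summable_nat_add_iff 1).2 h1
    have h3 := h2.mul_left q⁻¹
    apply h3.congr
    intro n
    push_cast
    rw [pow_succ]
    field_simp
  have hM : ∀ (j : ℕ) (ρ : ℝ), 0 < ρ → ρ ≤ r / 2 →
      Summable (fun n : ℕ => ((n:ℝ) + 1) ^ j * (‖cf n‖ * ρ ^ n)) := by
    intro j ρ hρ0 hρr
    have hq0 : 0 < ρ / r := by positivity
    have hq1 : ρ / r < 1 := by rw [div_lt_one hr0]; linarith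
    apply Summable.of_nonneg_of_le (fun n => by positivity) _
      ((hP (j+1) (ρ/r) hq0 hq1).mul_left (Sb * r))
    intro n
    have e1 : (ρ / r) ^ n = ρ ^ n * (r⁻¹) ^ n := by rw [div_eq_mul_inv, mul_pow]
    calc ((n:ℝ) + 1) ^ j * (‖cf n‖ * ρ ^ n)
        ≤ ((n:ℝ) + 1) ^ j * ((((n:ℝ) + 1) * ((Sb * r) * (r⁻¹) ^ n)) * ρ ^ n) := by
          apply mul_le_mul_of_nonneg_left _ (by positivity)
          exact mul_le_mul_of_nonneg_right (hcfbound n) (by positivity)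
      _ = (Sb * r) * (((n:ℝ) + 1) ^ (j+1) * (ρ/r) ^ n) := by
          rw [e1, pow_succ]
          ring
  -- specific summable series
  have hM3 : Summable (fun n : ℕ => ‖cf (n+6)‖ * (r/4) ^ n) := by
    have h0 := hM 0 (r/4) (by positivity) (by linarith)
    have h0' : Summable (fun n : ℕ => ‖cf n‖ * (r/4) ^ n) :=
      h0.congr (fun n => by rw [pow_zero, one_mul])
    have h6 := (summable_nat_add_iff 6).2 h0'
    apply (h6.mul_left (((r/4:ℝ) ^ 6)⁻¹)).congr
    intro n
    rw [pow_add]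
    field_simp
  have hM4 : Summable (fun n : ℕ => (((n:ℝ) + 6) * ‖cf (n+6)‖) * (r/4) ^ n) := by
    have h0 := hM 1 (r/4) (by positivity) (by linarith)
    have h6 := (summable_nat_add_iff 6).2 h0
    apply Summable.of_nonneg_of_le (fun n => by positivity) _
      (h6.mul_left (((r/4:ℝ) ^ 6)⁻¹))
    intro n
    have e1 : ((r/4:ℝ) ^ 6)⁻¹ * (((n+6:ℕ):ℝ) + 1) ^ 1 * (‖cf (n+6)‖ * (r/4) ^ (n+6))
        = (((n:ℝ) + 7) * ‖cf (n+6)‖) * (r/4) ^ n := by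
      rw [pow_add]
      push_cast
      field_simp
      ring
    calc (((n:ℝ) + 6) * ‖cf (n+6)‖) * (r/4) ^ n
        ≤ (((n:ℝ) + 7) * ‖cf (n+6)‖) * (r/4) ^ n := by
          apply mul_le_mul_of_nonneg_right _ (by positivity)
          apply mul_le_mul_of_nonneg_right _ (norm_nonneg _)
          linarith
      _ = ((r/4:ℝ) ^ 6)⁻¹ * (((n+6:ℕ):ℝ) + 1) ^ 1 * (‖cf (n+6)‖ * (r/4) ^ (n+6)) := e1.symm
      _ = ((r/4:ℝ) ^ 6)⁻¹ * ((((n+6:ℕ):ℝ) + 1) ^ 1 * (‖cf (n+6)‖ * (r/4) ^ (n+6))) := by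
          ring
  -- ## derivative bound
  have hbound' : ∀ y : ℂ, ‖y‖ ≤ r/2 → ∀ n : ℕ,
      ‖cf n * ((n:ℂ) * y ^ (n-1))‖ ≤ (2/r) * (((n:ℝ) + 1) ^ 1 * (‖cf n‖ * (r/2) ^ n)) := by
    intro y hy n
    cases n with
    | zero => simp; positivity
    | succ m =>
      have e0 : (m + 1 - 1 : ℕ) = m := rfl
      have h1 : ‖((m+1:ℕ):ℂ)‖ = (m:ℝ) + 1 := by
        rw [Complex.norm_natCast]; push_cast; ring
      have h2 : ‖y‖ ^ m ≤ (r/2) ^ m := pow_le_pow_left₀ (norm_nonneg _) hy m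
      have e2 : (2/r) * ((((m+1:ℕ):ℝ) + 1) ^ 1 * (‖cf (m+1)‖ * (r/2) ^ (m+1)))
          = (((m:ℝ) + 2) * ‖cf (m+1)‖) * (r/2) ^ m := by
        rw [pow_succ]
        push_cast
        field_simp
        ring
      rw [norm_mul (cf (m+1)) _, norm_mul (((m+1:ℕ):ℂ)) _, norm_pow, e0, h1, e2]
      calc ‖cf (m+1)‖ * (((m:ℝ) + 1) * ‖y‖ ^ m)
          ≤ ‖cf (m+1)‖ * ((((m:ℝ) + 2)) * (r/2) ^ m) := by
            apply mul_le_mul_of_nonneg_left _ (norm_nonneg _)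
            apply mul_le_mul (by linarith) h2 (by positivity) (by linarith)
        _ = (((m:ℝ) + 2) * ‖cf (m+1)‖) * (r/2) ^ m := by ring
  have hDeriv : ∀ w : ℂ, w ∈ Metric.ball (0:ℂ) (r/2) →
      HasDerivAt (fun u : ℂ => ∑' n : ℕ, cf n * u ^ n)
        (∑' n : ℕ, cf n * ((n:ℂ) * w ^ (n-1))) w := by
    intro w hw
    apply hasDerivAt_tsum_of_isPreconnected
      ((hM 1 (r/2) (by positivity) le_rfl).mul_left (2/r))
      Metric.isOpen_ball (convex_ball (0:ℂ) (r/2)).isPreconnected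
      (fun n y _ => (hasDerivAt_pow n y).const_mul (cf n))
      (fun n y hy => hbound' y (le_of_lt (mem_ball_zero_iff.1 hy)) n)
      (Metric.mem_ball_self (by positivity)) ?_ hw
    apply summable_zero.congr
    intro n
    cases n with
    | zero => rw [hcf0]; simp
    | succ m => simp
  have hwp_eq : ∀ w : ℂ, ‖w‖ < r/2 → wp H w = (w ^ 2)⁻¹ + ∑' n : ℕ, cf n * w ^ n := by
    intro w hw
    have h := (hkey w hw).tsum_eq
    rw [h]; ring
  have hderiv_wp : ∀ w : ℂ, w ≠ 0 → ‖w‖ < r/2 →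
      deriv (wp H) w = -2 * (w ^ 3)⁻¹ + ∑' n : ℕ, cf n * ((n:ℂ) * w ^ (n-1)) := by
    intro w hw0 hw
    have hball : Metric.ball (0:ℂ) (r/2) ∈ 𝓝 w :=
      Metric.isOpen_ball.mem_nhds (mem_ball_zero_iff.2 hw)
    have hev : wp H =ᶠ[𝓝 w] (fun u : ℂ => (u ^ 2)⁻¹ + ∑' n : ℕ, cf n * u ^ n) :=
      Filter.eventuallyEq_of_mem hball (fun u hu => hwp_eq u (mem_ball_zero_iff.1 hu))
    rw [hev.deriv_eq]
    have h2 : HasDerivAt (fun u : ℂ => (u ^ 2)⁻¹) (-2 * (w ^ 3)⁻¹) w := by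
      have h := hasDerivAt_zpow (-2) w (Or.inl hw0)
      have e1 : (fun u : ℂ => u ^ (-2:ℤ)) = (fun u : ℂ => (u ^ 2)⁻¹) := by
        funext u
        rw [zpow_neg, zpow_ofNat]
      have e2 : ((-2:ℤ):ℂ) * w ^ ((-2:ℤ) - 1) = -2 * (w ^ 3)⁻¹ := by
        rw [show ((-2:ℤ) - 1) = (-3:ℤ) by norm_num, zpow_neg, zpow_ofNat]
        norm_num
      rw [e1, e2] at h
      exact h
    exact (h2.add (hDeriv w (mem_ball_zero_iff.2 hw))).deriv
  -- ## head sums and constants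
  have hσ4 : σ 4 = ∑' l : ↥(H \ {0}), ((l : ℂ) ^ 4)⁻¹ := rfl
  have hσ6 : σ 6 = ∑' l : ↥(H \ {0}), ((l : ℂ) ^ 6)⁻¹ := rfl
  have hA5 : A / 5 = -3 * σ 4 := by rw [hA, ← hσ4]; ring
  have hB7 : B / 7 = -5 * σ 6 := by rw [hB, ← hσ6]; ring
  have h2B7 : 2 * B / 7 = -10 * σ 6 := by rw [hB, ← hσ6]; ring
  -- eventually facts
  have hev1 : ∀ᶠ z : ℂ in 𝓝[{z : ℂ | z ∉ H ∧ z ≠ 0}] 0, ‖z‖ < r/4 ∧ z ≠ 0 := by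
    have ha : ∀ᶠ z : ℂ in 𝓝 (0:ℂ), ‖z‖ < r/4 := by
      filter_upwards [Metric.ball_mem_nhds (0:ℂ) (by positivity : (0:ℝ) < r/4)] with w hw
      exact mem_ball_zero_iff.1 hw
    filter_upwards [ha.filter_mono nhdsWithin_le_nhds,
      eventually_mem_nhdsWithin] with w h1 h2
    exact ⟨h1, h2.2⟩
  constructor
  -- ### part (i)
  · set M1 : ℝ := ∑' n : ℕ, ‖cf (n+6)‖ * (r/4) ^ n with hM1def
    have hM1nn : 0 ≤ M1 := tsum_nonneg (fun n => by positivity)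
    apply squeeze_zero_norm'
      (a := fun z : ℂ => M1 * ‖z‖)
    · filter_upwards [hev1] with z hz
      obtain ⟨hz4, hz0⟩ := hz
      have hz2 : ‖z‖ < r/2 := by linarith
      have hsumz := (hkey z hz2).summable
      have hsplit := hsumz.sum_add_tsum_nat_add 6
      have hhead : ∑ i ∈ Finset.range 6, cf i * z ^ i = 3 * σ 4 * z^2 + 5 * σ 6 * z^4 := by
        rw [Finset.sum_range_succ, Finset.sum_range_succ, Finset.sum_range_succ,
          Finset.sum_range_succ, Finset.sum_range_succ, Finset.sum_range_one]
        rw [hcf0, hcf1, hcf2, hcf3, hcf4, hcf5]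
        ring
      have hE : wp H z - (z ^ 2)⁻¹ + A / 5 * z ^ 2 + B / 7 * z ^ 4
          = ∑' n : ℕ, cf (n+6) * z ^ (n+6) := by
        have e1 : wp H z - (z ^ 2)⁻¹ = ∑' n : ℕ, cf n * z ^ n := ((hkey z hz2).tsum_eq).symm
        rw [e1, ← hsplit, hhead, hA5, hB7]
        ring
      rw [hE]
      have hterm : ∀ n : ℕ, ‖cf (n+6) * z ^ (n+6)‖ ≤ (‖cf (n+6)‖ * (r/4) ^ n) * ‖z‖ ^ 6 := by
        intro n
        rw [norm_mul, norm_pow, pow_add]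
        calc ‖cf (n+6)‖ * (‖z‖ ^ n * ‖z‖ ^ 6)
            ≤ ‖cf (n+6)‖ * ((r/4) ^ n * ‖z‖ ^ 6) := by
              apply mul_le_mul_of_nonneg_left _ (norm_nonneg _)
              exact mul_le_mul_of_nonneg_right
                (pow_le_pow_left₀ (norm_nonneg z) hz4.le n) (by positivity)
          _ = (‖cf (n+6)‖ * (r/4) ^ n) * ‖z‖ ^ 6 := by ring
      have hsnorm : Summable (fun n : ℕ => ‖cf (n+6) * z ^ (n+6)‖) :=
        Summable.of_nonneg_of_le (fun n => norm_nonneg _) hterm (hM3.mul_right _)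
      have hTb : ‖∑' n : ℕ, cf (n+6) * z ^ (n+6)‖ ≤ M1 * ‖z‖ ^ 6 := by
        calc ‖∑' n : ℕ, cf (n+6) * z ^ (n+6)‖ ≤ ∑' n : ℕ, ‖cf (n+6) * z ^ (n+6)‖ :=
              norm_tsum_le_tsum_norm hsnorm
          _ ≤ ∑' n : ℕ, (‖cf (n+6)‖ * (r/4) ^ n) * ‖z‖ ^ 6 :=
              Summable.tsum_le_tsum hterm hsnorm (hM3.mul_right _)
          _ = M1 * ‖z‖ ^ 6 := by rw [tsum_mul_right]
      have hznorm : (0:ℝ) < ‖z‖ := norm_pos_iff.2 hz0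
      rw [norm_div, norm_pow, div_le_iff₀ (by positivity : (0:ℝ) < ‖z‖ ^ 5)]
      calc ‖∑' n : ℕ, cf (n+6) * z ^ (n+6)‖ ≤ M1 * ‖z‖ ^ 6 := hTb
        _ = M1 * ‖z‖ * ‖z‖ ^ 5 := by ring
    · have h : Tendsto (fun z : ℂ => M1 * ‖z‖) (𝓝 0) (𝓝 (M1 * ‖(0:ℂ)‖)) :=
        (continuous_const.mul continuous_norm).tendsto (0:ℂ)
      simp only [norm_zero, mul_zero] at h
      exact h.mono_left nhdsWithin_le_nhds
  -- ### part (ii)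
  · set M2 : ℝ := ∑' n : ℕ, (((n:ℝ) + 6) * ‖cf (n+6)‖) * (r/4) ^ n with hM2def
    have hM2nn : 0 ≤ M2 := tsum_nonneg (fun n => by positivity)
    apply squeeze_zero_norm'
      (a := fun z : ℂ => M2 * ‖z‖)
    · filter_upwards [hev1] with z hz
      obtain ⟨hz4, hz0⟩ := hz
      have hz2 : ‖z‖ < r/2 := by linarith
      have hsumD : Summable (fun n : ℕ => cf n * ((n:ℂ) * z ^ (n-1))) := by
        apply Summable.of_norm_bounded
          ((hM 1 (r/2) (by positivity) le_rfl).mul_left (2/r))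
        exact fun n => hbound' z hz2.le n
      have hsplitD := hsumD.sum_add_tsum_nat_add 6
      have hheadD : ∑ i ∈ Finset.range 6, cf i * ((i:ℂ) * z ^ (i-1))
          = 6 * σ 4 * z + 20 * σ 6 * z^3 := by
        rw [Finset.sum_range_succ, Finset.sum_range_succ, Finset.sum_range_succ,
          Finset.sum_range_succ, Finset.sum_range_succ, Finset.sum_range_one]
        rw [hcf0, hcf1, hcf2, hcf3, hcf4, hcf5]
        norm_num
        ring
      have hE : -(1 / 2) * deriv (wp H) z - (z ^ 3)⁻¹ - A / 5 * z - 2 * B / 7 * z ^ 3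
          = -(1/2) * ∑' n : ℕ, cf (n+6) * (((n+6:ℕ):ℂ) * z ^ ((n+6)-1)) := by
        rw [hderiv_wp z hz0 hz2, ← hsplitD, hheadD, hA5, h2B7]
        ring
      rw [hE]
      have hterm : ∀ n : ℕ, ‖cf (n+6) * (((n+6:ℕ):ℂ) * z ^ ((n+6)-1))‖
          ≤ ((((n:ℝ) + 6) * ‖cf (n+6)‖) * (r/4) ^ n) * ‖z‖ ^ 5 := by
        intro n
        have e0 : (n + 6 - 1 : ℕ) = n + 5 := rfl
        rw [e0, norm_mul (cf (n+6)) _, norm_mul (((n+6:ℕ):ℂ)) _, norm_pow, Complex.norm_natCast]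
        have h2 : ‖z‖ ^ (n+5) = ‖z‖ ^ n * ‖z‖ ^ 5 := by rw [pow_add]
        rw [h2]
        have h3 : ‖z‖ ^ n ≤ (r/4) ^ n := pow_le_pow_left₀ (norm_nonneg z) hz4.le n
        calc ‖cf (n+6)‖ * (((n+6:ℕ):ℝ) * (‖z‖ ^ n * ‖z‖ ^ 5))
            ≤ ‖cf (n+6)‖ * (((n+6:ℕ):ℝ) * ((r/4) ^ n * ‖z‖ ^ 5)) := by
              apply mul_le_mul_of_nonneg_left _ (norm_nonneg _)
              apply mul_le_mul_of_nonneg_left _ (by positivity)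
              exact mul_le_mul_of_nonneg_right h3 (by positivity)
          _ = ((((n:ℝ) + 6) * ‖cf (n+6)‖) * (r/4) ^ n) * ‖z‖ ^ 5 := by
              push_cast
              ring
      have hsnorm : Summable (fun n : ℕ => ‖cf (n+6) * (((n+6:ℕ):ℂ) * z ^ ((n+6)-1))‖) :=
        Summable.of_nonneg_of_le (fun n => norm_nonneg _) hterm (hM4.mul_right _)
      have hTb : ‖∑' n : ℕ, cf (n+6) * (((n+6:ℕ):ℂ) * z ^ ((n+6)-1))‖ ≤ M2 * ‖z‖ ^ 5 := by
        calc ‖∑' n : ℕ, cf (n+6) * (((n+6:ℕ):ℂ) * z ^ ((n+6)-1))‖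
            ≤ ∑' n : ℕ, ‖cf (n+6) * (((n+6:ℕ):ℂ) * z ^ ((n+6)-1))‖ :=
              norm_tsum_le_tsum_norm hsnorm
          _ ≤ ∑' n : ℕ, ((((n:ℝ) + 6) * ‖cf (n+6)‖) * (r/4) ^ n) * ‖z‖ ^ 5 :=
              Summable.tsum_le_tsum hterm hsnorm (hM4.mul_right _)
          _ = M2 * ‖z‖ ^ 5 := by rw [tsum_mul_right]
      have hznorm : (0:ℝ) < ‖z‖ := norm_pos_iff.2 hz0
      rw [norm_div, norm_pow, norm_mul, div_le_iff₀ (by positivity : (0:ℝ) < ‖z‖ ^ 4)]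
      have hhalf : ‖-(1/2 : ℂ)‖ = 1/2 := by norm_num
      rw [hhalf]
      calc 1/2 * ‖∑' n : ℕ, cf (n+6) * (((n+6:ℕ):ℂ) * z ^ ((n+6)-1))‖
          ≤ 1/2 * (M2 * ‖z‖ ^ 5) := by linarith
        _ ≤ M2 * ‖z‖ ^ 5 := by nlinarith [pow_nonneg (norm_nonneg z) 5]
        _ = M2 * ‖z‖ * ‖z‖ ^ 4 := by ring
    · have h : Tendsto (fun z : ℂ => M2 * ‖z‖) (𝓝 0) (𝓝 (M2 * ‖(0:ℂ)‖)) :=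
        (continuous_const.mul continuous_norm).tendsto (0:ℂ)
      simp only [norm_zero, mul_zero] at h
      exact h.mono_left nhdsWithin_le_nhds
end

section
/- Let H ⊂ ℂ be a lattice. Then the infinite product defining the Weierstrass sigma function σ_H converges for every z ∈ ℂ (the family of factors is multipliable), σ_H is complex differentiable on all of ℂ, and σ_H(z) = 0 if and only if z ∈ H. -/
/-- The Weierstrass sigma function of a lattice `H`:
`σ_H(z) = z ∏_{λ ∈ H∖{0}} (1 − z/λ) exp(z/λ + z²/(2λ²))`. -/
noncomputable def wsigma (H : Set ℂ) (z : ℂ) : ℂ :=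
  z * ∏' l : ↥(H \ {0}),
    ((1 - z / (l : ℂ)) * Complex.exp (z / (l : ℂ) + z ^ 2 / (2 * (l : ℂ) ^ 2)))

namespace WS8
open Complex


lemma log_bound {w : ℂ} (hw : ‖w‖ ≤ 1 / 2) :
    ‖Complex.log (1 - w) + w + w ^ 2 / 2‖ ≤ 2 * ‖w‖ ^ 3 := by
  have hw1 : ‖w‖ < 1 := lt_of_le_of_lt hw (by norm_num)
  have H0 := Complex.hasSum_taylorSeries_neg_log hw1
  have H1 : HasSum (fun n : ℕ => w ^ (n + 3) / ((n + 3 : ℕ) : ℂ))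
      (-Complex.log (1 - w) - ∑ i ∈ Finset.range 3, w ^ i / i) :=
    ((hasSum_nat_add_iff' 3).2 H0)
  have hsum3 : ∑ i ∈ Finset.range 3, w ^ i / (i : ℂ) = w + w ^ 2 / 2 := by
    simp [Finset.sum_range_succ]
  rw [hsum3] at H1
  have hbound : ∀ n : ℕ, ‖w ^ (n + 3) / ((n + 3 : ℕ) : ℂ)‖ ≤ ‖w‖ ^ 3 * (1 / 2) ^ n := by
    intro n
    rw [norm_div, pow_add]
    have h3 : (1 : ℝ) ≤ ‖((n + 3 : ℕ) : ℂ)‖ := by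
      rw [Complex.norm_natCast]
      exact_mod_cast Nat.one_le_iff_ne_zero.2 (by omega)
    calc ‖w ^ n * w ^ 3‖ / ‖((n + 3 : ℕ) : ℂ)‖ ≤ ‖w ^ n * w ^ 3‖ / 1 :=
          div_le_div_of_nonneg_left (norm_nonneg _) one_pos h3
      _ = ‖w‖ ^ n * ‖w‖ ^ 3 := by simp [norm_mul, norm_pow]
      _ ≤ (1 / 2) ^ n * ‖w‖ ^ 3 :=
          mul_le_mul_of_nonneg_right (pow_le_pow_left₀ (norm_nonneg w) hw n)
            (by positivity)
      _ = ‖w‖ ^ 3 * (1 / 2) ^ n := by ring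
  have hsumg : Summable fun n : ℕ => ‖w‖ ^ 3 * (1 / 2 : ℝ) ^ n :=
    (summable_geometric_of_lt_one (by norm_num) (by norm_num)).mul_left _
  have hnorm : Summable fun n : ℕ => ‖w ^ (n + 3) / ((n + 3 : ℕ) : ℂ)‖ :=
    hsumg.of_nonneg_of_le (fun n => norm_nonneg _) hbound
  have key : ‖-Complex.log (1 - w) - (w + w ^ 2 / 2)‖ ≤ 2 * ‖w‖ ^ 3 := by
    rw [← H1.tsum_eq]
    calc ‖∑' n : ℕ, w ^ (n + 3) / ((n + 3 : ℕ) : ℂ)‖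
        ≤ ∑' n : ℕ, ‖w ^ (n + 3) / ((n + 3 : ℕ) : ℂ)‖ := norm_tsum_le_tsum_norm hnorm
      _ ≤ ∑' n : ℕ, ‖w‖ ^ 3 * (1 / 2 : ℝ) ^ n := Summable.tsum_le_tsum hbound hnorm hsumg
      _ = ‖w‖ ^ 3 * 2 := by
          rw [tsum_mul_left, tsum_geometric_of_lt_one (by norm_num) (by norm_num)]
          norm_num
      _ = 2 * ‖w‖ ^ 3 := by ring
  calc ‖Complex.log (1 - w) + w + w ^ 2 / 2‖
      = ‖-Complex.log (1 - w) - (w + w ^ 2 / 2)‖ := by rw [← norm_neg]; ring_nf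
    _ ≤ 2 * ‖w‖ ^ 3 := key

lemma factor_eq_exp {w : ℂ} (hw : w ≠ 1) :
    (1 - w) * Complex.exp (w + w ^ 2 / 2) = Complex.exp (Complex.log (1 - w) + w + w ^ 2 / 2) := by
  have h : (1 : ℂ) - w ≠ 0 := by
    intro h; apply hw; linear_combination -h
  rw [← Complex.exp_log h, ← Complex.exp_add, Complex.exp_log h, add_assoc]



lemma summable_lattice {H : Set ℂ} {ω₁ ω₂ : ℂ} (hli : LinearIndependent ℝ ![ω₁, ω₂])
    (hHeq : H = {z : ℂ | ∃ m n : ℤ, z = m * ω₁ + n * ω₂}) :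
    Summable fun l : ↥(H \ {0}) => (‖(l : ℂ)‖ ^ 3)⁻¹ := by
  classical
  have hcard : Fintype.card (Fin 2) = Module.finrank ℝ ℂ := by
    simp [Complex.finrank_real_complex]
  let b : Module.Basis (Fin 2) ℝ ℂ := basisOfLinearIndependentOfCardEqFinrank hli hcard
  have hb : ∀ i, b i = ![ω₁, ω₂] i := fun i => by
    simp [b, coe_basisOfLinearIndependentOfCardEqFinrank]
  let T : (Fin 2 → ℝ) ≃ₗ[ℝ] ℂ := b.equivFun.symm
  have hT : ∀ v : Fin 2 → ℝ, T v = v 0 * ω₁ + v 1 * ω₂ := by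
    intro v
    have h1 : T v = ∑ i, v i • b i := b.equivFun_symm_apply v
    rw [h1, Fin.sum_univ_two, hb 0, hb 1]
    simp [Complex.real_smul]
  let L : (Fin 2 → ℝ) ≃L[ℝ] ℂ := T.toContinuousLinearEquiv
  set K : ℝ := ‖(L.symm : ℂ →L[ℝ] (Fin 2 → ℝ))‖ with hKdef
  have hK : ∀ v : Fin 2 → ℝ, ‖v‖ ≤ K * ‖T v‖ := by
    intro v
    have : L.symm (L v) = v := L.symm_apply_apply v
    calc ‖v‖ = ‖L.symm (L v)‖ := by rw [this]
      _ ≤ K * ‖L v‖ := (L.symm : ℂ →L[ℝ] (Fin 2 → ℝ)).le_opNorm (L v)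
      _ = K * ‖T v‖ := rfl
  -- the integer-vector map
  let ψ : (Fin 2 → ℤ) → ℂ := fun v => (v 0 : ℂ) * ω₁ + (v 1 : ℂ) * ω₂
  have hψT : ∀ v : Fin 2 → ℤ, ψ v = T (fun i => (v i : ℝ)) := by
    intro v; rw [hT]; push_cast; rfl
  have hψinj : Function.Injective ψ := by
    intro v v' h
    rw [hψT, hψT] at h
    have := T.injective h
    funext i
    exact_mod_cast congrFun this i
  have hψ0 : ψ 0 = 0 := by simp [ψ]
  -- the equivalence
  have hmem : ∀ v : Fin 2 → ℤ, ψ v ∈ H := by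
    intro v; rw [hHeq]; exact ⟨v 0, v 1, rfl⟩
  let Φ : {v : Fin 2 → ℤ // v ≠ 0} → ↥(H \ {0}) := fun v =>
    ⟨ψ v.1, hmem v.1, fun h => v.2 (hψinj (h.trans hψ0.symm))⟩
  have hΦbij : Function.Bijective Φ := by
    constructor
    · intro v v' h
      exact Subtype.ext (hψinj (congrArg Subtype.val h))
    · rintro ⟨l, hlH, hl0⟩
      rw [hHeq] at hlH
      obtain ⟨m, n, rfl⟩ := hlH
      refine ⟨⟨![m, n], ?_⟩, ?_⟩
      · intro h
        apply hl0
        have : ψ ![m, n] = 0 := by rw [h, hψ0]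
        simpa [ψ] using this
      · apply Subtype.ext
        simp [Φ, ψ]
  -- norms of integer vectors
  have hnorm_cast : ∀ v : Fin 2 → ℤ, ‖(fun i => (v i : ℝ))‖ = ‖v‖ := by
    intro v
    simp only [Pi.norm_def, Pi.nnnorm_def]
    congr 1
  -- Eisenstein summability
  have hEis : Summable fun x : Fin 2 → ℤ => ‖x‖ ^ (-(3 : ℝ)) :=
    EisensteinSeries.summable_one_div_norm_rpow (by norm_num)
  have hEis' : Summable fun v : {v : Fin 2 → ℤ // v ≠ 0} => K ^ 3 * ‖(v : Fin 2 → ℤ)‖ ^ (-(3 : ℝ)) :=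
    (hEis.subtype _).mul_left _
  have hcomp : Summable fun v : {v : Fin 2 → ℤ // v ≠ 0} => (‖ψ v.1‖ ^ 3)⁻¹ := by
    apply hEis'.of_nonneg_of_le (fun v => by positivity)
    intro v
    have hv0 : (1 : ℝ) ≤ ‖(v : Fin 2 → ℤ)‖ := by
      obtain ⟨i, hi⟩ := Function.ne_iff.1 v.2
      calc (1 : ℝ) ≤ ‖v.1 i‖ := by
            rw [Int.norm_eq_abs]; exact_mod_cast Int.one_le_abs (by simpa using hi)
        _ ≤ ‖(v : Fin 2 → ℤ)‖ := norm_le_pi_norm _ i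
    have hKpos : 0 < K := by
      have h1 := hK ![1, 0]
      have h2 : (0 : ℝ) < ‖![(1 : ℝ), 0]‖ := by
        rw [norm_pos_iff]
        intro h
        simpa using congrFun h 0
      nlinarith [norm_nonneg (T ![(1 : ℝ), 0])]
    have hψpos : 0 < ‖ψ v.1‖ := by
      rw [norm_pos_iff]
      intro h
      exact v.2 (hψinj (h.trans hψ0.symm))
    have hkey : ‖(v : Fin 2 → ℤ)‖ ≤ K * ‖ψ v.1‖ := by
      calc ‖(v : Fin 2 → ℤ)‖ = ‖(fun i => ((v : Fin 2 → ℤ) i : ℝ))‖ := (hnorm_cast _).symm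
        _ ≤ K * ‖T (fun i => ((v : Fin 2 → ℤ) i : ℝ))‖ := hK _
        _ = K * ‖ψ v.1‖ := by rw [← hψT]
    have hcast : ‖(v : Fin 2 → ℤ)‖ ^ (-(3 : ℝ)) = (‖(v : Fin 2 → ℤ)‖ ^ (3 : ℕ))⁻¹ := by
      rw [← Real.rpow_natCast ‖(v : Fin 2 → ℤ)‖ 3, ← Real.rpow_neg (norm_nonneg _)]
      norm_num
    rw [hcast]
    have h1 : ‖(v : Fin 2 → ℤ)‖ ^ 3 ≤ K ^ 3 * ‖ψ v.1‖ ^ 3 := by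
      calc ‖(v : Fin 2 → ℤ)‖ ^ 3 ≤ (K * ‖ψ v.1‖) ^ 3 :=
            pow_le_pow_left₀ (norm_nonneg _) hkey 3
        _ = K ^ 3 * ‖ψ v.1‖ ^ 3 := by ring
    have hb3 : (0 : ℝ) < ‖(v : Fin 2 → ℤ)‖ ^ 3 := by positivity
    have ha3 : (0 : ℝ) < ‖ψ v.1‖ ^ 3 := by positivity
    rw [← div_eq_mul_inv, ← one_div, div_le_div_iff₀ ha3 hb3]
    nlinarith [h1]
  exact ((Equiv.ofBijective Φ hΦbij).summable_iff
    (f := fun l : ↥(H \ {0}) => (‖(l : ℂ)‖ ^ 3)⁻¹)).1 hcomp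


variable {H : Set ℂ}


variable {H : Set ℂ}

lemma finite_norm_lt (hsum : Summable fun l : ↥(H \ {0}) => (‖(l : ℂ)‖ ^ 3)⁻¹)
    (M : ℝ) : {l : ↥(H \ {0}) | ‖(l : ℂ)‖ < M}.Finite := by
  set M' : ℝ := max M 1 with hM'
  have hM'pos : 0 < M' := lt_of_lt_of_le one_pos (le_max_right _ _)
  have h0 : (0 : ℝ) < (M' ^ 3)⁻¹ := by positivity
  have h1 : {l : ↥(H \ {0}) | ¬ (‖(l : ℂ)‖ ^ 3)⁻¹ < (M' ^ 3)⁻¹}.Finite := by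
    have := hsum.tendsto_cofinite_zero (Metric.ball_mem_nhds 0 h0)
    rw [Filter.mem_map] at this
    apply Set.Finite.subset this
    intro l hl
    simp only [Set.mem_setOf_eq, not_lt] at hl
    simp only [Set.mem_compl_iff, Set.mem_preimage, Metric.mem_ball, Real.dist_eq]
    intro h
    rw [sub_zero] at h
    exact absurd (lt_of_abs_lt h) (not_lt.2 hl)
  apply h1.subset
  intro l hl
  simp only [Set.mem_setOf_eq] at hl ⊢
  have hlpos : 0 < ‖(l : ℂ)‖ := by
    rw [norm_pos_iff]
    exact fun h => l.2.2 h
  have hlt : ‖(l : ℂ)‖ < M' := lt_of_lt_of_le hl (le_max_left _ _)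
  have : (M' ^ 3)⁻¹ < (‖(l : ℂ)‖ ^ 3)⁻¹ := by
    apply inv_strictAnti₀ (by positivity)
    exact pow_lt_pow_left₀ hlt (le_of_lt hlpos) (by norm_num)
  exact not_lt.2 (le_of_lt this)


lemma key (hsum : Summable fun l : ↥(H \ {0}) => (‖(l : ℂ)‖ ^ 3)⁻¹) {R : ℝ} (hR : 0 < R) :
    ∃ S : Finset ↥(H \ {0}), ∃ F : ℂ → ℂ,
      DifferentiableOn ℂ F (Metric.ball 0 R) ∧
      ∀ z ∈ Metric.ball (0 : ℂ) R,
        HasProd (fun l : ↥(H \ {0}) =>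
            (1 - z / (l : ℂ)) * Complex.exp (z / (l : ℂ) + z ^ 2 / (2 * (l : ℂ) ^ 2)))
          ((∏ l ∈ S, (1 - z / (l : ℂ)) * Complex.exp (z / (l : ℂ) + z ^ 2 / (2 * (l : ℂ) ^ 2))) *
            Complex.exp (F z)) := by
  classical
  set ι := ↥(H \ {0})
  have hl0 : ∀ l : ι, (l : ℂ) ≠ 0 := fun l => fun h => l.2.2 h
  set S : Finset ι := (finite_norm_lt hsum (2 * R)).toFinset with hS
  set C : Set ι := (↑S : Set ι)ᶜ with hC
  have hCnorm : ∀ l : C, 2 * R ≤ ‖((l : ι) : ℂ)‖ := by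
    rintro ⟨l, hl⟩
    have : l ∉ S := hl
    rw [hS, Set.Finite.mem_toFinset] at this
    exact not_lt.1 this
  -- the log summands
  set h : C → ℂ → ℂ := fun l z =>
    Complex.log (1 - z / ((l : ι) : ℂ)) + z / ((l : ι) : ℂ) + (z / ((l : ι) : ℂ)) ^ 2 / 2
    with hh
  have hw_small : ∀ (l : C) (z : ℂ), z ∈ Metric.ball (0 : ℂ) R → ‖z / ((l : ι) : ℂ)‖ ≤ 1 / 2 := by
    intro l z hz
    rw [Metric.mem_ball, dist_zero_right] at hz
    have h2R : (0 : ℝ) < 2 * R := by positivity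
    have hlnorm := hCnorm l
    rw [norm_div]
    calc ‖z‖ / ‖((l : ι) : ℂ)‖ ≤ R / (2 * R) := by
          apply div_le_div₀ (le_of_lt hR) (le_of_lt hz) h2R hlnorm
      _ = 1 / 2 := by field_simp
  set u : C → ℝ := fun l => 2 * R ^ 3 * (‖((l : ι) : ℂ)‖ ^ 3)⁻¹ with hu
  have hu_sum : Summable u := by
    apply Summable.mul_left
    exact hsum.subtype C
  have hbound : ∀ (l : C) (z : ℂ), z ∈ Metric.ball (0 : ℂ) R → ‖h l z‖ ≤ u l := by
    intro l z hz
    have hzR : ‖z‖ < R := by rwa [Metric.mem_ball, dist_zero_right] at hz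
    have hw := hw_small l z hz
    calc ‖h l z‖ ≤ 2 * ‖z / ((l : ι) : ℂ)‖ ^ 3 := log_bound hw
      _ ≤ u l := by
          rw [hu, norm_div, div_pow]
          have hlpos : (0 : ℝ) < ‖((l : ι) : ℂ)‖ := lt_of_lt_of_le (by positivity) (hCnorm l)
          rw [div_eq_mul_inv, ← mul_assoc]
          exact mul_le_mul_of_nonneg_right (mul_le_mul_of_nonneg_left
            (pow_le_pow_left₀ (norm_nonneg z) (le_of_lt hzR) 3) (by norm_num)) (by positivity)
  have hsummand_diff : ∀ l : C, DifferentiableOn ℂ (h l) (Metric.ball (0 : ℂ) R) := by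
    intro l z hz
    have hw := hw_small l z hz
    have hslit : (1 - z / ((l : ι) : ℂ)) ∈ Complex.slitPlane := by
      have : ‖-(z / ((l : ι) : ℂ))‖ < 1 := by
        rw [norm_neg]; exact lt_of_le_of_lt hw (by norm_num)
      simpa [sub_eq_add_neg] using Complex.mem_slitPlane_of_norm_lt_one this
    have hd1 : DifferentiableAt ℂ (fun z : ℂ => 1 - z / ((l : ι) : ℂ)) z :=
      (differentiableAt_const 1).sub (differentiableAt_id.div_const _)
    have hd : DifferentiableAt ℂ (h l) z := by
      apply DifferentiableAt.add
      apply DifferentiableAt.add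
      · exact hd1.clog hslit
      · exact differentiableAt_id.div_const _
      · exact ((differentiableAt_id.div_const _).pow 2).div_const _
    exact hd.differentiableWithinAt
  set F : ℂ → ℂ := fun z => ∑' l : C, h l z with hF
  have hFdiff : DifferentiableOn ℂ F (Metric.ball 0 R) :=
    differentiableOn_tsum_of_summable_norm hu_sum hsummand_diff Metric.isOpen_ball hbound
  refine ⟨S, F, hFdiff, ?_⟩
  intro z hz
  have hhf : ∀ l : C, Complex.exp (h l z) =
      (1 - z / ((l : ι) : ℂ)) * Complex.exp (z / ((l : ι) : ℂ) + z ^ 2 / (2 * ((l : ι) : ℂ) ^ 2)) := by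
    intro l
    have hw := hw_small l z hz
    have hwne : z / ((l : ι) : ℂ) ≠ 1 := by
      intro hcon
      rw [hcon] at hw
      norm_num at hw
    have halg : (z / ((l : ι) : ℂ)) ^ 2 / 2 = z ^ 2 / (2 * ((l : ι) : ℂ) ^ 2) := by
      rw [div_pow, div_div]
      ring_nf
    rw [hh]
    rw [← factor_eq_exp hwne, halg]
  have hsummable : Summable fun l : C => h l z :=
    hu_sum.of_norm_bounded (fun l => hbound l z hz)
  have hHS : HasProd (fun l : C => (fun l : ι =>
      (1 - z / (l : ℂ)) * Complex.exp (z / (l : ℂ) + z ^ 2 / (2 * (l : ℂ) ^ 2))) l)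
      (Complex.exp (F z)) := by
    apply hsummable.hasSum.cexp.congr_fun
    intro l
    exact (hhf l).symm
  have hfull := ((S.hasProd (fun l : ι =>
      (1 - z / (l : ℂ)) * Complex.exp (z / (l : ℂ) + z ^ 2 / (2 * (l : ℂ) ^ 2)))).mul_compl hHS)
  exact hfull


lemma hasProd_zero_of_eq_zero {β : Type*} {f : β → ℂ} {b : β} (hb : f b = 0) : HasProd f 0 := by
  rw [HasProd]
  apply tendsto_const_nhds.congr'
  filter_upwards [Filter.eventually_ge_atTop ({b} : Finset β)] with s hs
  exact (Finset.prod_eq_zero (Finset.singleton_subset_iff.1 hs) hb).symm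


end WS8

/-- The product defining `σ_H` converges for every `z`, `σ_H` is entire, and its zero
set is exactly `H`. -/
theorem stmt_8 (H : Set ℂ) (hH : IsLattice H) :
    (∀ z : ℂ, Multipliable fun l : ↥(H \ {0}) =>
      (1 - z / (l : ℂ)) * Complex.exp (z / (l : ℂ) + z ^ 2 / (2 * (l : ℂ) ^ 2))) ∧
    Differentiable ℂ (wsigma H) ∧
    (∀ z : ℂ, wsigma H z = 0 ↔ z ∈ H) := by
  obtain ⟨ω₁, ω₂, hli, hHeq⟩ := hH
  have hsum := WS8.summable_lattice hli hHeq
  have hl0 : ∀ l : ↥(H \ {0}), (l : ℂ) ≠ 0 := fun l h => l.2.2 h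
  have hballmem : ∀ z : ℂ, z ∈ Metric.ball (0 : ℂ) (‖z‖ + 1) := by
    intro z
    rw [Metric.mem_ball, dist_zero_right]
    linarith
  have h0H : (0 : ℂ) ∈ H := by
    rw [hHeq]
    exact ⟨0, 0, by simp⟩
  -- part 1
  have hmult : ∀ z : ℂ, Multipliable fun l : ↥(H \ {0}) =>
      (1 - z / (l : ℂ)) * Complex.exp (z / (l : ℂ) + z ^ 2 / (2 * (l : ℂ) ^ 2)) := by
    intro z
    obtain ⟨S, F, _, hProd⟩ := WS8.key hsum (R := ‖z‖ + 1) (by positivity)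
    exact ⟨_, hProd z (hballmem z)⟩
  refine ⟨hmult, ?_, ?_⟩
  -- part 2
  · intro z₀
    obtain ⟨S, F, hFdiff, hProd⟩ := WS8.key hsum (R := ‖z₀‖ + 1) (by positivity)
    have hEq : Set.EqOn (wsigma H)
        (fun z => z * ((∏ l ∈ S, (1 - z / (l : ℂ)) *
          Complex.exp (z / (l : ℂ) + z ^ 2 / (2 * (l : ℂ) ^ 2))) * Complex.exp (F z)))
        (Metric.ball (0 : ℂ) (‖z₀‖ + 1)) := by
      intro z hz
      unfold wsigma
      rw [(hProd z hz).tprod_eq]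
    have hdiff2 : DifferentiableOn ℂ
        (fun z => z * ((∏ l ∈ S, (1 - z / (l : ℂ)) *
          Complex.exp (z / (l : ℂ) + z ^ 2 / (2 * (l : ℂ) ^ 2))) * Complex.exp (F z)))
        (Metric.ball (0 : ℂ) (‖z₀‖ + 1)) := by
      apply DifferentiableOn.mul differentiableOn_id
      apply DifferentiableOn.mul
      · apply DifferentiableOn.fun_finsetProd
        intro l _
        apply DifferentiableOn.mul
        · exact ((differentiable_const (1 : ℂ)).sub (differentiable_id.div_const _)).differentiableOn
        · exact (Complex.differentiable_exp.comp ((differentiable_id.div_const _).add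
            ((differentiable_id.pow 2).div_const _))).differentiableOn
      · intro z hz
        exact ((Complex.differentiable_exp.differentiableAt.comp z
          ((hFdiff z hz).differentiableAt (Metric.isOpen_ball.mem_nhds hz))).differentiableWithinAt)
    have : DifferentiableOn ℂ (wsigma H) (Metric.ball (0 : ℂ) (‖z₀‖ + 1)) :=
      hdiff2.congr hEq
    exact (this.differentiableAt (Metric.isOpen_ball.mem_nhds (hballmem z₀)))
  -- part 3
  · intro z
    constructor
    · intro hzero
      by_contra hzH
      have hz0 : z ≠ 0 := fun h => hzH (h ▸ h0H)
      obtain ⟨S, F, _, hProd⟩ := WS8.key hsum (R := ‖z‖ + 1) (by positivity)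
      have htprod := (hProd z (hballmem z)).tprod_eq
      unfold wsigma at hzero
      rw [htprod] at hzero
      have hprodne : (∏ l ∈ S, (1 - z / (l : ℂ)) *
          Complex.exp (z / (l : ℂ) + z ^ 2 / (2 * (l : ℂ) ^ 2))) ≠ 0 := by
        rw [Finset.prod_ne_zero_iff]
        intro l _
        apply mul_ne_zero
        · intro hcon
          rw [sub_eq_zero] at hcon
          have hzl : z = (l : ℂ) := (div_eq_one_iff_eq (hl0 l)).1 hcon.symm
          exact hzH (hzl ▸ l.2.1)
        · exact Complex.exp_ne_zero _
      exact (mul_ne_zero hz0 (mul_ne_zero hprodne (Complex.exp_ne_zero _))) hzero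
    · intro hzH
      rcases eq_or_ne z 0 with rfl | hz0
      · simp [wsigma]
      · have hmem : z ∈ H \ {0} := ⟨hzH, hz0⟩
        have : ((1 - z / ((⟨z, hmem⟩ : ↥(H \ {0})) : ℂ)) * Complex.exp
            (z / ((⟨z, hmem⟩ : ↥(H \ {0})) : ℂ) +
              z ^ 2 / (2 * ((⟨z, hmem⟩ : ↥(H \ {0})) : ℂ) ^ 2))) = 0 := by
          simp [div_self hz0]
        unfold wsigma
        rw [(WS8.hasProd_zero_of_eq_zero (f := fun l : ↥(H \ {0}) =>
          (1 - z / (l : ℂ)) * Complex.exp (z / (l : ℂ) + z ^ 2 / (2 * (l : ℂ) ^ 2)))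
          (b := ⟨z, hmem⟩) this).tprod_eq, mul_zero]
end

section
/- Let V be a ℂ-vector space with an alternating bilinear form ⟨·,·⟩, let k ≥ 1 be an integer, let γ₁, γ₂ ∈ V, and let τ, τ′ ∈ ℂ with τ ≠ τ′. Set c = (τ − τ′)·⟨γ₁, γ₂⟩, u = (γ₂ − τ′γ₁)^{⊗k} + (γ₂ − τγ₁)^{⊗k} and v = (τ − τ′)^{−1}·((γ₂ − τ′γ₁)^{⊗k} − (γ₂ − τγ₁)^{⊗k}), elements of the k-th tensor power V^{⊗k}. Then ⟨u, u⟩_k = (1 + (−1)^k)·c^k, ⟨v, v⟩_k = −((1 + (−1)^k)/(τ − τ′)²)·c^k, and ⟨u, v⟩_k = ((1 − (−1)^k)/(τ′ − τ))·c^k. -/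
/-!
Write `p = (γ₂ - τ'γ₁)^{⊗k}` and `q = (γ₂ - τγ₁)^{⊗k}`. On pure tensors `⟨·,·⟩_k` is a product,
so its Gram matrix on `p, q` is computed from the one of `⟨·,·⟩` on `γ₂ - τ'γ₁, γ₂ - τγ₁`,
which by alternation is `[[0, c], [-c, 0]]`. Hence `⟨p, p⟩_k = ⟨q, q⟩_k = 0`, `⟨p, q⟩_k = c^k`
and `⟨q, p⟩_k = (-c)^k`, and the three values follow by bilinearity.
-/

open scoped TensorProduct

theorem LinearMap.IsAlt.apply_sub_smul_sub_smul {R M : Type*} [CommRing R] [AddCommGroup M]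
    [Module R M] {B : M →ₗ[R] M →ₗ[R] R} (hB : B.IsAlt) (x y : M) (s t : R) :
    B (y - s • x) (y - t • x) = (t - s) * B x y := by
  have hyx : B y x = -B x y := (hB.neg x y).symm
  simp only [map_sub, map_smul, LinearMap.sub_apply, LinearMap.smul_apply, smul_eq_mul,
    hB.self_eq_zero, hyx]
  ring

theorem PiTensorProduct.apply_tprod_const_tprod_const {R M ι : Type*} [CommSemiring R]
    [AddCommMonoid M] [Module R M] [Fintype ι] {B : M →ₗ[R] M →ₗ[R] R}
    {Bι : (⨂[R] _ : ι, M) →ₗ[R] (⨂[R] _ : ι, M) →ₗ[R] R}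
    (hBι : ∀ a b : ι → M, Bι (tprod R a) (tprod R b) = ∏ i, B (a i) (b i)) (x y : M) :
    Bι (tprod R fun _ => x) (tprod R fun _ => y) = B x y ^ Fintype.card ι := by
  rw [hBι, Finset.prod_const, Finset.card_univ]

/-- For an alternating bilinear form `⟨·,·⟩` on a complex vector space `V`, the induced
bilinear form `⟨·,·⟩_k` on the `k`-th tensor power (characterized on simple tensors by
`⟨a₁⊗⋯⊗a_k, b₁⊗⋯⊗b_k⟩_k = ∏ ⟨a_i, b_i⟩`) takes the stated values on
`u = (γ₂−τ′γ₁)^{⊗k} + (γ₂−τγ₁)^{⊗k}` and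
`v = (τ−τ′)⁻¹((γ₂−τ′γ₁)^{⊗k} − (γ₂−τγ₁)^{⊗k})`, where `c = (τ−τ′)⟨γ₁,γ₂⟩`. -/
theorem stmt_14 {V : Type*} [AddCommGroup V] [Module ℂ V]
    (B : V →ₗ[ℂ] V →ₗ[ℂ] ℂ) (hB : ∀ w : V, B w w = 0)
    (k : ℕ) (hk : 1 ≤ k)
    (Bk : (⨂[ℂ]^k V) →ₗ[ℂ] (⨂[ℂ]^k V) →ₗ[ℂ] ℂ)
    (hBk : ∀ a b : Fin k → V,
      Bk (PiTensorProduct.tprod ℂ a) (PiTensorProduct.tprod ℂ b) = ∏ i, B (a i) (b i))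
    (γ₁ γ₂ : V) (τ τ' : ℂ) (hττ' : τ ≠ τ')
    (c : ℂ) (hc : c = (τ - τ') * B γ₁ γ₂)
    (u v : ⨂[ℂ]^k V)
    (hu : u = (PiTensorProduct.tprod ℂ fun _ : Fin k => γ₂ - τ' • γ₁) +
              (PiTensorProduct.tprod ℂ fun _ : Fin k => γ₂ - τ • γ₁))
    (hv : v = (τ - τ')⁻¹ • ((PiTensorProduct.tprod ℂ fun _ : Fin k => γ₂ - τ' • γ₁) -
              (PiTensorProduct.tprod ℂ fun _ : Fin k => γ₂ - τ • γ₁))) :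
    Bk u u = (1 + (-1) ^ k) * c ^ k ∧
    Bk v v = -((1 + (-1) ^ k) / (τ - τ') ^ 2) * c ^ k ∧
    Bk u v = ((1 - (-1) ^ k) / (τ' - τ)) * c ^ k := by
  have hk0 : k ≠ 0 := Nat.one_le_iff_ne_zero.mp hk
  have hB' : B.IsAlt := hB
  have hBk' := PiTensorProduct.apply_tprod_const_tprod_const hBk
  simp only [Fintype.card_fin] at hBk'
  set p := PiTensorProduct.tprod ℂ fun _ : Fin k => γ₂ - τ' • γ₁
  set q := PiTensorProduct.tprod ℂ fun _ : Fin k => γ₂ - τ • γ₁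
  have hpp : Bk p p = 0 := by rw [hBk', hB, zero_pow hk0]
  have hqq : Bk q q = 0 := by rw [hBk', hB, zero_pow hk0]
  have hpq : Bk p q = c ^ k := by rw [hBk', hB'.apply_sub_smul_sub_smul, hc]
  have hqp : Bk q p = (-1) ^ k * c ^ k := by
    rw [hBk', hB'.apply_sub_smul_sub_smul, hc, ← mul_pow]
    ring
  have hττ'0 : τ - τ' ≠ 0 := sub_ne_zero.mpr hττ'
  subst hu hv
  simp only [map_add, map_sub, map_smul, LinearMap.add_apply, LinearMap.sub_apply,
    LinearMap.smul_apply, smul_eq_mul, hpp, hqq, hpq, hqp]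
  refine ⟨by ring, ?_, ?_⟩
  · field_simp
    ring
  · rw [← neg_sub τ τ']
    field_simp
    ring
end

section
/- Let R be a commutative ℚ-algebra, M an R-module, and d : R → M a derivation. Let a, b, x, y ∈ R with d a = 0, d b = 0, y invertible in R, and y² = x³ + a·x + b. Then: (i) (2y)⁻¹·d x = (2y³)⁻¹·(2a·x + 3b)·d x − d(x·y⁻¹); (ii) (2y)⁻¹·x·d x = (6y³)⁻¹·(2a² − 9b·x)·d x + d(x²·y⁻¹ + (2a/3)·y⁻¹). In other words, the differentials of the second kind ω = dx/(2y) and φ = x·dx/(2y) are congruent, modulo exact elements, to (2ax+3b)dx/(2y³) and (2a²−9bx)dx/(6y³) respectively. -/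
/-!
Differentiating `y² = x³ + ax + b` gives `2y dy = (3x² + a) dx`, hence
`d(y⁻¹) = -(3x² + a) dx / (2y³)`. Expanding `d(x/y)` and `d(x²/y + (2a/3)/y)` with the Leibniz
rule turns both identities into equalities of coefficients of `dx`, which hold modulo
`y y⁻¹ = 1` and the curve equation.
-/

namespace Derivation

variable {R A M : Type*} [CommRing R] [CommRing A] [Algebra R A] [AddCommGroup M]
  [Module A M] [Module R M] (D : Derivation R A M) {a b x y yi : A}

theorem two_mul_smul_apply_of_sq_eq_cubic (ha : D a = 0) (hb : D b = 0)
    (hxy : y ^ 2 = x ^ 3 + a * x + b) : (2 * y) • D y = (3 * x ^ 2 + a) • D x := by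
  have := congrArg D hxy
  simp only [map_add, leibniz, leibniz_pow, ha, hb] at this
  linear_combination (norm := module) this

theorem apply_inv_eq_of_sq_eq_cubic {h : A} (h2 : 2 * h = 1) (ha : D a = 0) (hb : D b = 0)
    (hxy : y ^ 2 = x ^ 3 + a * x + b) (hy : y * yi = 1) :
    D yi = -(h * yi ^ 3 * (3 * x ^ 2 + a)) • D x := calc
  D yi = -(h * yi ^ 3) • (2 * y) • D y := by
    rw [D.leibniz_of_mul_eq_one (mul_comm y yi ▸ hy), smul_smul]
    congr 1
    linear_combination yi ^ 2 * h2 + 2 * h * yi ^ 2 * hy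
  _ = -(h * yi ^ 3 * (3 * x ^ 2 + a)) • D x := by
    rw [D.two_mul_smul_apply_of_sq_eq_cubic ha hb hxy, smul_smul, neg_mul]

theorem half_inv_smul_apply_eq_of_sq_eq_cubic {h : A} (h2 : 2 * h = 1) (ha : D a = 0)
    (hb : D b = 0) (hxy : y ^ 2 = x ^ 3 + a * x + b) (hy : y * yi = 1) :
    (h * yi) • D x = (h * (yi ^ 3 * (2 * a * x + 3 * b))) • D x - D (x * yi) := by
  rw [D.leibniz, D.apply_inv_eq_of_sq_eq_cubic h2 ha hb hxy hy]
  match_scalars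
  linear_combination 3 * h * yi ^ 3 * hxy - 3 * h * yi * (y * yi + 1) * hy - yi * h2

theorem half_mul_inv_smul_apply_eq_of_sq_eq_cubic {s c : A} (h6 : 6 * s = 1)
    (hc : 3 * c = 2 * a) (hdc : D c = 0) (ha : D a = 0) (hb : D b = 0)
    (hxy : y ^ 2 = x ^ 3 + a * x + b) (hy : y * yi = 1) :
    (3 * s * (x * yi)) • D x
      = (s * (yi ^ 3 * (2 * a ^ 2 - 9 * b * x))) • D x + D (x ^ 2 * yi + c * yi) := by
  have h2 : 2 * (3 * s) = 1 := by linear_combination h6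
  rw [map_add, D.leibniz c, D.leibniz, D.leibniz_pow, hdc,
    D.apply_inv_eq_of_sq_eq_cubic h2 ha hb hxy hy]
  match_scalars
  linear_combination (3 * s * x ^ 2 * yi ^ 3 + s * yi ^ 3 * a) * hc - 9 * s * x * yi ^ 3 * hxy
    + 9 * s * x * yi * (y * yi + 1) * hy + 2 * x * yi * h6

end Derivation

theorem stmt_16_general {R M : Type*} [CommRing R] [Algebra ℚ R]
    [AddCommGroup M] [Module R M] [Module ℚ M]
    (d : Derivation ℚ R M)
    (a b x y yi : R) (hy : y * yi = 1)
    (ha : d a = 0) (hb : d b = 0) (hxy : y ^ 2 = x ^ 3 + a * x + b) :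
    (((1 / 2 : ℚ) • yi) • d x
        = ((1 / 2 : ℚ) • (yi ^ 3 * (2 * a * x + 3 * b))) • d x - d (x * yi)) ∧
    (((1 / 2 : ℚ) • (x * yi)) • d x
        = ((1 / 6 : ℚ) • (yi ^ 3 * (2 * a ^ 2 - 9 * b * x))) • d x
          + d (x ^ 2 * yi + ((2 / 3 : ℚ) • a) * yi)) := by
  have h2 : 2 * algebraMap ℚ R (1 / 2) = 1 := by
    rw [← map_ofNat (algebraMap ℚ R) 2, ← map_mul]; norm_num
  have h6 : 6 * algebraMap ℚ R (1 / 6) = 1 := by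
    rw [← map_ofNat (algebraMap ℚ R) 6, ← map_mul]; norm_num
  have h3 : algebraMap ℚ R (1 / 2) = 3 * algebraMap ℚ R (1 / 6) := by
    rw [← map_ofNat (algebraMap ℚ R) 3, ← map_mul]; norm_num
  have hc : 3 * (2 / 3 : ℚ) • a = 2 * a := by
    rw [Algebra.smul_def, ← mul_assoc, ← map_ofNat (algebraMap ℚ R) 3,
      ← map_ofNat (algebraMap ℚ R) 2, ← map_mul]
    norm_num
  have hdc : d ((2 / 3 : ℚ) • a) = 0 := by rw [d.map_smul, ha, smul_zero]
  simp only [Algebra.smul_def (1 / 2 : ℚ), Algebra.smul_def (1 / 6 : ℚ)]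
  refine ⟨d.half_inv_smul_apply_eq_of_sq_eq_cubic h2 ha hb hxy hy, ?_⟩
  rw [h3]
  exact d.half_mul_inv_smul_apply_eq_of_sq_eq_cubic h6 hc hdc ha hb hxy hy

/-- With `y² = x³ + ax + b`, `da = db = 0`, `y` invertible with inverse `yi`, the
differentials of the second kind `ω = dx/(2y)` and `φ = x·dx/(2y)` are congruent, modulo
exact elements, to `(2ax+3b)dx/(2y³)` and `(2a²−9bx)dx/(6y³)` respectively:
(i) `(2y)⁻¹·dx = (2y³)⁻¹·(2ax + 3b)·dx − d(x/y)`;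
(ii) `(2y)⁻¹·x·dx = (6y³)⁻¹·(2a² − 9bx)·dx + d(x²/y + (2a/3)/y)`. -/
theorem stmt_16 {R M : Type*} [CommRing R] [Algebra ℚ R]
    [AddCommGroup M] [Module R M] [Module ℚ M] [IsScalarTower ℚ R M]
    (d : Derivation ℚ R M)
    (a b x y yi : R) (hy : y * yi = 1)
    (ha : d a = 0) (hb : d b = 0) (hxy : y ^ 2 = x ^ 3 + a * x + b) :
    (((1 / 2 : ℚ) • yi) • d x
        = ((1 / 2 : ℚ) • (yi ^ 3 * (2 * a * x + 3 * b))) • d x - d (x * yi)) ∧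
    (((1 / 2 : ℚ) • (x * yi)) • d x
        = ((1 / 6 : ℚ) • (yi ^ 3 * (2 * a ^ 2 - 9 * b * x))) • d x
          + d (x ^ 2 * yi + ((2 / 3 : ℚ) • a) * yi)) :=
  stmt_16_general d a b x y yi hy ha hb hxy
end
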